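/- arXiv:math/0607269 — 5 statements merged into one kernel-verified Lean document; each statement's English description precedes it below -/
import Mathlib

section
/- (Kimberley's conjecture) For every positive integer β, the number of (1,β)-BM relations is |R_{1,β}| = ∏_{i=1}^{β} (2i+1) = 3·5·…·(2β+1), the double factorial (2β+1)!!. -/
open Set

/-- Signed letters: letter index together with a sign (`true` = positive). -/
abbrev V (n : ℕ) := Fin n × Bool

/-- Formal inversion of a signed letter. -/
def iv {n : ℕ} (x : V n) : V n := (x.1, !x.2)

/-- Oriented squares: tuples (a, b, a', b'). -/
abbrev Tup (α β : ℕ) := V α × V β × V α × V β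

/-- The geometric square [aba'b'], as the set of its four representatives. -/
def square {α β : ℕ} (a : V α) (b : V β) (a' : V α) (b' : V β) : Set (Tup α β) :=
  {(a, b, a', b'), (a', b', a, b), (iv a, iv b', iv a', iv b), (iv a', iv b, iv a, iv b')}

/-- The link of a set of geometric squares: the set of (horizontal, vertical)
edges contributed by the corners of the squares. -/
def link {α β : ℕ} (R : Set (Set (Tup α β))) : Set (V α × V β) :=
  {e | ∃ q ∈ R, ∃ t ∈ q, e = (iv t.1, t.2.1)}

/-- An (α,β)-BM relation: a set of α·β geometric squares whose link is the
complete bipartite graph K_{2α,2β}. -/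
def IsBM (α β : ℕ) (R : Set (Set (Tup α β))) : Prop :=
  (∀ q ∈ R, ∃ a b a' b', q = square a b a' b') ∧
  R.ncard = α * β ∧ link R = Set.univ

/-- Embedding of old vertical letters into the enlarged alphabet. -/
def up {β : ℕ} (b : V β) : V (β + 1) := (b.1.castSucc, b.2)

/-- The new vertical letter b_{β+1}. -/
def bn (β : ℕ) : V (β + 1) := (Fin.last β, true)

/-- Embedding of tuples along `up`. -/
def upT {α β : ℕ} (t : Tup α β) : Tup α (β + 1) :=
  (t.1, up t.2.1, t.2.2.1, up t.2.2.2)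

/-- Embedding of a geometric square into the enlarged alphabet. -/
def upSq {α β : ℕ} (q : Set (Tup α β)) : Set (Tup α (β + 1)) := upT '' q

/-- Embedding of a set of geometric squares into the enlarged alphabet. -/
def upR {α β : ℕ} (R : Set (Set (Tup α β))) : Set (Set (Tup α (β + 1))) := upSq '' R

/-- The generator a₁. -/
def a1 : V 1 := (0, true)

/-- ψ_β^{(1)}: adjoin one of the three squares involving only b_{β+1}. -/
def psi1 (β : ℕ) (R : Set (Set (Tup 1 β))) : Set (Set (Set (Tup 1 (β + 1)))) :=
  (fun s => upR R ∪ {s}) ''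
    {square a1 (bn β) (iv a1) (iv (bn β)),
     square a1 (bn β) a1 (iv (bn β)),
     square a1 (bn β) (iv a1) (bn β)}

/-- ψ_β^{(2)}: replace one square [aba'b'] of R by one of the two pairs
{[a b_{β+1} a' b'], [a b a' b_{β+1}⁻¹]} or {[a b_{β+1}⁻¹ a' b'], [a b a' b_{β+1}]}. -/
def psi2 (β : ℕ) (R : Set (Set (Tup 1 β))) : Set (Set (Set (Tup 1 (β + 1)))) :=
  {U | ∃ a b a' b', square a b a' b' ∈ R ∧
    (U = upR (R \ {square a b a' b'}) ∪
        {square a (bn β) a' (up b'), square a (up b) a' (iv (bn β))} ∨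
     U = upR (R \ {square a b a' b'}) ∪
        {square a (iv (bn β)) a' (up b'), square a (up b) a' (bn β)})}

/-- The map ψ_β. -/
def psi (β : ℕ) (R : Set (Set (Tup 1 β))) : Set (Set (Set (Tup 1 (β + 1)))) :=
  psi1 β R ∪ psi2 β R
section Toolkit
variable {n m α β : ℕ}

@[simp] lemma kb_iv_iv (x : V n) : iv (iv x) = x := by simp [iv]

@[simp] lemma kb_iv_inj {x y : V n} : iv x = iv y ↔ x = y := by
  constructor
  · intro h; have := congrArg iv h; simpa using this
  · rintro rfl; rfl

@[simp] lemma kb_iv_ne (x : V n) : iv x ≠ x := by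
  simp [iv, Prod.ext_iff]

@[simp] lemma kb_ne_iv (x : V n) : x ≠ iv x := (kb_iv_ne x).symm

@[simp] lemma kb_iv_fst (x : V n) : (iv x).1 = x.1 := rfl

@[simp] lemma kb_up_iv (y : V β) : up (iv y) = iv (up y) := rfl

@[simp] lemma kb_up_inj {x y : V β} : up x = up y ↔ x = y := by
  constructor
  · intro h
    simp only [up, Prod.mk.injEq] at h
    exact Prod.ext (Fin.castSucc_injective _ h.1) h.2
  · rintro rfl; rfl

lemma kb_up_fst_ne (y : V β) : (up y).1 ≠ Fin.last β :=
  (Fin.castSucc_lt_last y.1).ne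

@[simp] lemma kb_up_ne_bn (y : V β) : up y ≠ bn β := by
  intro h; exact kb_up_fst_ne y (by rw [h]; rfl)

@[simp] lemma kb_up_ne_ivbn (y : V β) : up y ≠ iv (bn β) := by
  intro h; exact kb_up_fst_ne y (by rw [h]; rfl)

@[simp] lemma kb_bn_ne_up (y : V β) : bn β ≠ up y := (kb_up_ne_bn y).symm
@[simp] lemma kb_ivbn_ne_up (y : V β) : iv (bn β) ≠ up y := (kb_up_ne_ivbn y).symm

lemma kb_new_cases {x : V (β + 1)} (h : x.1 = Fin.last β) : x = bn β ∨ x = iv (bn β) := by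
  rcases x with ⟨i, b⟩
  cases b
  · right; simp [bn, iv]; exact h
  · left; simp [bn]; exact h

lemma kb_old_case {x : V (β + 1)} (h : x.1 ≠ Fin.last β) : ∃ y : V β, x = up y := by
  rcases x with ⟨i, b⟩
  rcases Fin.eq_castSucc_of_ne_last h with ⟨j, rfl⟩
  exact ⟨(j, b), rfl⟩

lemma kb_v1_cases (x : V 1) : x = a1 ∨ x = iv a1 := by revert x; decide

lemma kb_v1_dich (x y : V 1) : y = x ∨ y = iv x := by revert x y; decide

/-- tuple membership in a square -/
lemma kb_mem_square {a a' : V α} {b b' : V β} {t : Tup α β} :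
    t ∈ square a b a' b' ↔ t = (a, b, a', b') ∨ t = (a', b', a, b) ∨
      t = (iv a, iv b', iv a', iv b) ∨ t = (iv a', iv b, iv a, iv b') := by
  simp [square]

lemma kb_square_swap (a a' : V α) (b b' : V β) :
    square a' b' a b = square a b a' b' := by
  ext t; simp [square]; tauto

lemma kb_square_iv (a a' : V α) (b b' : V β) :
    square (iv a) (iv b') (iv a') (iv b) = square a b a' b' := by
  ext t; simp [square]; tauto

lemma kb_square_iv' (a a' : V α) (b b' : V β) :
    square (iv a') (iv b) (iv a) (iv b') = square a b a' b' := by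
  rw [← kb_square_swap a a' b b', ← kb_square_iv a' a b' b]

lemma kb_square_eq_iff {a a' c c' : V α} {b b' d d' : V β} :
    square c d c' d' = square a b a' b' ↔
      ((c, d, c', d') = (a, b, a', b') ∨ (c, d, c', d') = (a', b', a, b) ∨
       (c, d, c', d') = (iv a, iv b', iv a', iv b) ∨ (c, d, c', d') = (iv a', iv b, iv a, iv b')) := by
  constructor
  · intro h
    have : (c, d, c', d') ∈ square a b a' b' := by
      rw [← h]; exact Or.inl rfl
    simpa [kb_mem_square] using this
  · rintro (h | h | h | h) <;> (simp only [Prod.mk.injEq] at h; obtain ⟨rfl, rfl, rfl, rfl⟩ := h) <;>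
      first
        | rfl
        | apply kb_square_swap
        | apply kb_square_iv
        | apply kb_square_iv'

end Toolkit
section Toolkit2
variable {n m α β : ℕ}

/-- The edges contributed by a single square. -/
def kbE {α β : ℕ} (q : Set (Tup α β)) : Set (V α × V β) :=
  {e | ∃ t ∈ q, e = (iv t.1, t.2.1)}

lemma kb_link_eq (R : Set (Set (Tup α β))) : link R = ⋃ q ∈ R, kbE q := by
  ext e; simp [link, kbE]

lemma kb_link_union (A B : Set (Set (Tup α β))) : link (A ∪ B) = link A ∪ link B := by
  ext e
  constructor
  · rintro ⟨q, hq | hq, ht⟩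
    · exact Or.inl ⟨q, hq, ht⟩
    · exact Or.inr ⟨q, hq, ht⟩
  · rintro (⟨q, hq, ht⟩ | ⟨q, hq, ht⟩)
    · exact ⟨q, Or.inl hq, ht⟩
    · exact ⟨q, Or.inr hq, ht⟩

lemma kb_link_singleton (q : Set (Tup α β)) : link {q} = kbE q := by
  ext e; simp [link, kbE]

lemma kb_link_insert (q : Set (Tup α β)) (R : Set (Set (Tup α β))) :
    link (insert q R) = kbE q ∪ link R := by
  rw [Set.insert_eq, kb_link_union, kb_link_singleton]

lemma kbE_square (a a' : V α) (b b' : V β) :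
    kbE (square a b a' b') = {(iv a, b), (iv a', b'), (a, iv b'), (a', iv b)} := by
  ext e
  constructor
  · rintro ⟨t, ht, rfl⟩
    rcases kb_mem_square.1 ht with rfl | rfl | rfl | rfl <;> simp
  · intro he
    simp only [Set.mem_insert_iff, Set.mem_singleton_iff] at he
    rcases he with rfl | rfl | rfl | rfl
    · exact ⟨(a, b, a', b'), Or.inl rfl, rfl⟩
    · exact ⟨(a', b', a, b), by simp [kb_mem_square], rfl⟩
    · exact ⟨(iv a, iv b', iv a', iv b), by simp [kb_mem_square], by simp⟩
    · exact ⟨(iv a', iv b, iv a, iv b'), by simp [kb_mem_square], by simp⟩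

lemma kb_upT_inj : Function.Injective (upT (α := α) (β := β)) := by
  rintro ⟨x1, y1, x2, y2⟩ ⟨z1, w1, z2, w2⟩ h
  simp only [upT, Prod.mk.injEq] at h
  obtain ⟨h1, h2, h3, h4⟩ := h
  simp only [kb_up_inj] at h2 h4
  simp [h1, h2, h3, h4]

lemma kb_upSq_inj : Function.Injective (upSq (α := α) (β := β)) :=
  Set.image_injective.2 kb_upT_inj

lemma kb_upR_inj : Function.Injective (upR (α := α) (β := β)) :=
  Set.image_injective.2 kb_upSq_inj

lemma kb_upSq_square (a a' : V α) (b b' : V β) :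
    upSq (square a b a' b') = square a (up b) a' (up b') := by
  ext t
  simp only [upSq, Set.mem_image]
  constructor
  · rintro ⟨t₀, ht₀, rfl⟩
    rcases kb_mem_square.1 ht₀ with rfl | rfl | rfl | rfl <;>
      simp [kb_mem_square, upT]
  · intro ht
    rcases kb_mem_square.1 ht with rfl | rfl | rfl | rfl
    · exact ⟨(a, b, a', b'), Or.inl rfl, rfl⟩
    · exact ⟨(a', b', a, b), by simp [kb_mem_square], rfl⟩
    · exact ⟨(iv a, iv b', iv a', iv b), by simp [kb_mem_square], by simp [upT]⟩
    · exact ⟨(iv a', iv b, iv a, iv b'), by simp [kb_mem_square], by simp [upT]⟩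

/-- A square set "uses the new letter" if some tuple has a new letter in its b-slot. -/
def kbNew {β : ℕ} (p : Set (Tup 1 (β + 1))) : Prop :=
  ∃ t ∈ p, t.2.1.1 = Fin.last β

lemma kb_not_new_upSq (q : Set (Tup 1 β)) : ¬ kbNew (upSq q) := by
  rintro ⟨t, ht, hn⟩
  obtain ⟨t₀, _, rfl⟩ := ht
  exact kb_up_fst_ne t₀.2.1 hn

lemma kb_oldPart (T : Set (Set (Tup 1 β))) (K : Set (Set (Tup 1 (β + 1))))
    (hK : ∀ s ∈ K, kbNew s) : {p ∈ upR T ∪ K | ¬ kbNew p} = upR T := by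
  ext p
  constructor
  · rintro ⟨hp | hp, hnew⟩
    · exact hp
    · exact absurd (hK p hp) hnew
  · intro hp
    obtain ⟨q, hq, rfl⟩ := hp
    exact ⟨Or.inl ⟨q, hq, rfl⟩, kb_not_new_upSq q⟩

lemma kb_newPart (T : Set (Set (Tup 1 β))) (K : Set (Set (Tup 1 (β + 1))))
    (hK : ∀ s ∈ K, kbNew s) : {p ∈ upR T ∪ K | kbNew p} = K := by
  ext p
  constructor
  · rintro ⟨hp | hp, hnew⟩
    · obtain ⟨q, hq, rfl⟩ := hp
      exact absurd hnew (kb_not_new_upSq q)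
    · exact hp
  · intro hp
    exact ⟨Or.inr hp, hK p hp⟩

lemma kb_union_eq_union {T T' : Set (Set (Tup 1 β))} {K K' : Set (Set (Tup 1 (β + 1)))}
    (hK : ∀ s ∈ K, kbNew s) (hK' : ∀ s ∈ K', kbNew s)
    (h : upR T ∪ K = upR T' ∪ K') : T = T' ∧ K = K' := by
  have h1 : upR T = upR T' := by
    rw [← kb_oldPart T K hK, ← kb_oldPart T' K' hK', h]
  have h2 : K = K' := by rw [← kb_newPart T K hK, ← kb_newPart T' K' hK', h]
  exact ⟨kb_upR_inj h1, h2⟩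

lemma kb_ncard_le_four {X : Type*} (x1 x2 x3 x4 : X) :
    ({x1, x2, x3, x4} : Set X).ncard ≤ 4 := by
  refine le_trans (Set.ncard_insert_le _ _) ?_
  refine Nat.succ_le_succ ?_
  refine le_trans (Set.ncard_insert_le _ _) ?_
  refine Nat.succ_le_succ ?_
  refine le_trans (Set.ncard_insert_le _ _) ?_
  simp

lemma kb_ncard_le_three {X : Type*} (x1 x2 x3 : X) :
    ({x1, x2, x3} : Set X).ncard ≤ 3 := by
  refine le_trans (Set.ncard_insert_le _ _) ?_
  refine Nat.succ_le_succ ?_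
  refine le_trans (Set.ncard_insert_le _ _) ?_
  simp

lemma kbE_le_four (a a' : V α) (b b' : V β) : (kbE (square a b a' b')).ncard ≤ 4 := by
  rw [kbE_square]; exact kb_ncard_le_four _ _ _ _

lemma kb_four_distinct {X : Type*} {x1 x2 x3 x4 : X}
    (h : ({x1, x2, x3, x4} : Set X).ncard = 4) :
    x1 ≠ x2 ∧ x1 ≠ x3 ∧ x1 ≠ x4 ∧ x2 ≠ x3 ∧ x2 ≠ x4 ∧ x3 ≠ x4 := by
  refine ⟨?_, ?_, ?_, ?_, ?_, ?_⟩ <;> rintro rfl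
  · have : ({x1, x3, x4} : Set X).ncard = 4 := by rwa [Set.insert_comm x1 x1, Set.insert_idem] at h
    exact absurd this (by have := kb_ncard_le_three x1 x3 x4; omega)
  · have h' : ({x1, x2, x4} : Set X).ncard = 4 := by
      rw [show ({x1, x2, x1, x4} : Set X) = {x1, x2, x4} by
        ext y; simp only [Set.mem_insert_iff, Set.mem_singleton_iff]; tauto] at h
      exact h
    exact absurd h' (by have := kb_ncard_le_three x1 x2 x4; omega)
  · have h' : ({x1, x2, x3} : Set X).ncard = 4 := by
      rw [show ({x1, x2, x3, x1} : Set X) = {x1, x2, x3} by ext y; simp only [Set.mem_insert_iff, Set.mem_singleton_iff]; tauto] at h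
      exact h
    exact absurd h' (by have := kb_ncard_le_three x1 x2 x3; omega)
  · have h' : ({x1, x2, x4} : Set X).ncard = 4 := by
      rw [show ({x1, x2, x2, x4} : Set X) = {x1, x2, x4} by ext y; simp only [Set.mem_insert_iff, Set.mem_singleton_iff]; tauto] at h
      exact h
    exact absurd h' (by have := kb_ncard_le_three x1 x2 x4; omega)
  · have h' : ({x1, x2, x3} : Set X).ncard = 4 := by
      rw [show ({x1, x2, x3, x2} : Set X) = {x1, x2, x3} by ext y; simp only [Set.mem_insert_iff, Set.mem_singleton_iff]; tauto] at h
      exact h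
    exact absurd h' (by have := kb_ncard_le_three x1 x2 x3; omega)
  · have h' : ({x1, x2, x3} : Set X).ncard = 4 := by
      rw [show ({x1, x2, x3, x3} : Set X) = {x1, x2, x3} by ext y; simp only [Set.mem_insert_iff, Set.mem_singleton_iff]; tauto] at h
      exact h
    exact absurd h' (by have := kb_ncard_le_three x1 x2 x3; omega)

end Toolkit2
section Toolkit3
variable {β : ℕ}

lemma kb_ncard_biUnion_le {X Y : Type*} (F : Finset X) (f : X → Set Y) :
    (⋃ x ∈ F, f x).ncard ≤ ∑ x ∈ F, (f x).ncard := by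
  classical
  induction F using Finset.induction with
  | empty => simp
  | @insert a F ha ih =>
    rw [Finset.sum_insert ha]
    refine le_trans (le_of_eq (by rw [Finset.set_biUnion_insert])) ?_
    exact le_trans (Set.ncard_union_le _ _) (Nat.add_le_add_left ih _)

lemma kb_sum_card_le {X Y : Type*} (F : Finset X) (f : X → Set Y)
    (h : ∀ x ∈ F, (f x).ncard ≤ 4) : ∑ x ∈ F, (f x).ncard ≤ 4 * F.card := by
  calc ∑ x ∈ F, (f x).ncard ≤ ∑ _x ∈ F, 4 := Finset.sum_le_sum h
  _ = 4 * F.card := by rw [Finset.sum_const, smul_eq_mul, mul_comm]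

/-- a generic count for disjoint unions of constant-size finite sets. -/
lemma kb_ncard_biUnion {X Y : Type*} [Finite Y] (m : ℕ) :
    ∀ (F : Set X), F.Finite → ∀ (f : X → Set Y),
    (∀ x ∈ F, (f x).ncard = m) →
    (∀ x ∈ F, ∀ y ∈ F, x ≠ y → Disjoint (f x) (f y)) →
    (⋃ x ∈ F, f x).ncard = m * F.ncard := by
  intro F hF
  refine Set.Finite.induction_on (motive := fun F _ => ∀ (f : X → Set Y),
      (∀ x ∈ F, (f x).ncard = m) →
      (∀ x ∈ F, ∀ y ∈ F, x ≠ y → Disjoint (f x) (f y)) →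
      (⋃ x ∈ F, f x).ncard = m * F.ncard) F hF ?_ ?_
  · intro f _ _; simp
  · intro a F haF hFfin ih
    intro f hcard hdisj
    rw [Set.biUnion_insert]
    have hdisj2 : Disjoint (f a) (⋃ x ∈ F, f x) := by
      rw [Set.disjoint_left]
      intro y hy1 hy2
      simp only [Set.mem_iUnion] at hy2
      obtain ⟨x, hx, hyx⟩ := hy2
      exact Set.disjoint_left.1
        (hdisj a (Set.mem_insert a F) x (Set.mem_insert_of_mem a hx)
          (by rintro rfl; exact haF hx)) hy1 hyx
    rw [Set.ncard_union_eq hdisj2 (Set.toFinite _) (Set.toFinite _)]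
    rw [ih f (fun x hx => hcard x (Set.mem_insert_of_mem a hx))
      (fun x hx y hy => hdisj x (Set.mem_insert_of_mem a hx) y (Set.mem_insert_of_mem a hy))]
    rw [hcard a (Set.mem_insert a F),
      Set.ncard_insert_of_notMem haF hFfin]
    ring
end Toolkit3
section Toolkit4

lemma kb_ncard_univ (n : ℕ) : (Set.univ : Set (V 1 × V n)).ncard = 4 * n := by
  rw [Set.ncard_univ, Nat.card_eq_fintype_card]
  simp only [Fintype.card_prod, Fintype.card_fin, Fintype.card_bool]
  ring

lemma kb_edge_lemma {n : ℕ} {S : Set (Set (Tup 1 n))}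
    (hsq : ∀ q ∈ S, ∃ a b a' b', q = square a b a' b')
    (hcard : S.ncard = n) (hlink : link S = Set.univ) :
    ∀ q ∈ S, (kbE q).ncard = 4 ∧ ∀ q' ∈ S, ∀ e ∈ kbE q, e ∈ kbE q' → q = q' := by
  intro q hq
  classical
  set big : Set (V 1 × V n) := ⋃ p ∈ S \ {q}, kbE p with hbig
  have hn1 : 1 ≤ n := by
    rw [← hcard]
    exact (Set.ncard_pos (Set.toFinite S)).2 ⟨q, hq⟩
  have hcover : (Set.univ : Set (V 1 × V n)) = kbE q ∪ big := by
    rw [← hlink, kb_link_eq]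
    have : S = {q} ∪ (S \ {q}) := by
      rw [Set.union_diff_cancel (by simpa using hq)]
    rw [this]
    rw [Set.biUnion_union]
    simp [hbig]
  have hbig_le : big.ncard ≤ 4 * (n - 1) := by
    have hfin : (S \ {q}).Finite := Set.toFinite _
    have h1 : big = ⋃ p ∈ hfin.toFinset, kbE p := by
      ext e; simp only [hbig, Set.mem_iUnion, Set.Finite.mem_toFinset, exists_prop]
    have h2 : hfin.toFinset.card = n - 1 := by
      rw [← Set.ncard_eq_toFinset_card _ hfin, Set.ncard_diff_singleton_of_mem hq, hcard]
    calc big.ncard ≤ ∑ p ∈ hfin.toFinset, (kbE p).ncard := by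
          rw [h1]; exact kb_ncard_biUnion_le _ _
      _ ≤ 4 * hfin.toFinset.card := by
          refine kb_sum_card_le _ _ ?_
          intro p hp
          rw [Set.Finite.mem_toFinset] at hp
          obtain ⟨a, b, a', b', rfl⟩ := hsq p hp.1
          exact kbE_le_four a a' b b'
      _ = 4 * (n - 1) := by rw [h2]
  have hE_le : (kbE q).ncard ≤ 4 := by
    obtain ⟨a, b, a', b', rfl⟩ := hsq q hq
    exact kbE_le_four a a' b b'
  have hd_le : (kbE q \ big).ncard ≤ (kbE q).ncard :=
    Set.ncard_le_ncard Set.diff_subset (Set.toFinite _)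
  have hquniv : 4 * n ≤ (kbE q \ big).ncard + big.ncard := by
    calc 4 * n = (Set.univ : Set (V 1 × V n)).ncard := (kb_ncard_univ n).symm
      _ = ((kbE q \ big) ∪ big).ncard := by
          rw [hcover, Set.diff_union_self]
      _ ≤ _ := Set.ncard_union_le _ _
  have hd_ge : 4 ≤ (kbE q \ big).ncard := by omega
  have hEcard : (kbE q).ncard = 4 := by omega
  have hdiff_eq : kbE q \ big = kbE q :=
    Set.eq_of_subset_of_ncard_le Set.diff_subset (hEcard ▸ hd_ge) (Set.toFinite _)
  refine ⟨hEcard, ?_⟩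
  intro q' hq' e he he'
  by_contra hne
  have hq'big : kbE q' ⊆ big := by
    intro x hx
    exact Set.mem_biUnion ⟨hq', fun h => hne (by simpa using h.symm)⟩ hx
  have : e ∈ kbE q \ big := by rw [hdiff_eq]; exact he
  exact this.2 (hq'big he')

end Toolkit4
section Toolkit5
variable {β : ℕ}

@[simp] lemma kb_bn_ne_ivup (y : V β) : bn β ≠ iv (up y) := by
  intro h
  have : (bn β).1 = (iv (up y)).1 := by rw [h]
  exact kb_up_fst_ne y (by simpa [bn] using this.symm)

@[simp] lemma kb_ivup_ne_bn (y : V β) : iv (up y) ≠ bn β := fun h => kb_bn_ne_ivup y h.symm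

@[simp] lemma kb_ivbn_ne_ivup (y : V β) : iv (bn β) ≠ iv (up y) := by
  simp only [ne_eq, kb_iv_inj]; exact kb_bn_ne_up y

@[simp] lemma kb_ivup_ne_ivbn (y : V β) : iv (up y) ≠ iv (bn β) := by
  simp only [ne_eq, kb_iv_inj]; exact kb_up_ne_bn y

@[simp] lemma kb_bn_fst : (bn β).1 = Fin.last β := rfl
@[simp] lemma kb_ivbn_fst : (iv (bn β)).1 = Fin.last β := rfl

lemma kb_new_left {a a' : V 1} {b b' : V (β + 1)} (h : b.1 = Fin.last β) :
    kbNew (square a b a' b') := ⟨(a, b, a', b'), Or.inl rfl, h⟩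

lemma kb_new_right {a a' : V 1} {b b' : V (β + 1)} (h : b'.1 = Fin.last β) :
    kbNew (square a b a' b') := ⟨(a', b', a, b), by simp [kb_mem_square], h⟩

lemma kb_link_upR (T : Set (Set (Tup 1 β))) :
    link (upR T) = (fun f : V 1 × V β => (f.1, up f.2)) '' link T := by
  ext e
  constructor
  · rintro ⟨p, ⟨q, hq, rfl⟩, t, ⟨t₀, ht₀, rfl⟩, rfl⟩
    exact ⟨(iv t₀.1, t₀.2.1), ⟨q, hq, t₀, ht₀, rfl⟩, rfl⟩
  · rintro ⟨f, ⟨q, hq, t₀, ht₀, rfl⟩, rfl⟩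
    exact ⟨upSq q, ⟨q, hq, rfl⟩, upT t₀, ⟨t₀, ht₀, rfl⟩, rfl⟩

lemma kb_upR_ncard (T : Set (Set (Tup 1 β))) : (upR T).ncard = T.ncard :=
  Set.ncard_image_of_injective T kb_upSq_inj

/-- `psi2` can always be written with option 1. -/
lemma kb_psi2_iff {R : Set (Set (Tup 1 β))} {U : Set (Set (Tup 1 (β + 1)))} :
    U ∈ psi2 β R ↔ ∃ a b a' b', square a b a' b' ∈ R ∧
      U = upR (R \ {square a b a' b'}) ∪
        {square a (bn β) a' (up b'), square a (up b) a' (iv (bn β))} := by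
  constructor
  · rintro ⟨a, b, a', b', hq, h | h⟩
    · exact ⟨a, b, a', b', hq, h⟩
    · refine ⟨a', b', a, b, by rwa [kb_square_swap], ?_⟩
      rw [h, kb_square_swap a a' b b']
      rw [show square a' (bn β) a (up b) = square a (up b) a' (bn β) from kb_square_swap _ _ _ _]
      rw [show square a' (up b') a (iv (bn β)) = square a (iv (bn β)) a' (up b') from
        kb_square_swap _ _ _ _]
      rw [Set.pair_comm]
  · rintro ⟨a, b, a', b', hq, h⟩
    exact ⟨a, b, a', b', hq, Or.inl h⟩

lemma kb_s1_ne_s2 (a a' : V 1) (b b' : V β) :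
    square a (bn β) a' (up b') ≠ square a (up b) a' (iv (bn β)) := by
  intro h
  rw [kb_square_eq_iff] at h
  simp at h

/-- the three psi1 squares cover all four new edges -/
lemma kb_new_edges_psi1 {s : Set (Tup 1 (β + 1))}
    (hs : s = square a1 (bn β) (iv a1) (iv (bn β)) ∨ s = square a1 (bn β) a1 (iv (bn β)) ∨
          s = square a1 (bn β) (iv a1) (bn β))
    (x : V 1) (y : V (β + 1)) (hy : y.1 = Fin.last β) : (x, y) ∈ kbE s := by
  rcases kb_v1_cases x with rfl | rfl <;> rcases kb_new_cases hy with rfl | rfl <;>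
    rcases hs with rfl | rfl | rfl <;> simp [kbE_square]

lemma kb_psi_isBM {R : Set (Set (Tup 1 β))} (hR : IsBM 1 β R) :
    ∀ U ∈ psi β R, IsBM 1 (β + 1) U := by
  obtain ⟨hsq, hcard, hlink⟩ := hR
  intro U hU
  rcases hU with hU | hU
  · -- psi1 case
    obtain ⟨s, hs, rfl⟩ := hU
    simp only [Set.mem_insert_iff, Set.mem_singleton_iff] at hs
    have hnew : kbNew s := by
      rcases hs with rfl | rfl | rfl <;> exact kb_new_left rfl
    refine ⟨?_, ?_, ?_⟩
    · rintro q (⟨q₀, hq₀, rfl⟩ | hq)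
      · obtain ⟨a, b, a', b', rfl⟩ := hsq q₀ hq₀
        exact ⟨a, up b, a', up b', kb_upSq_square a a' b b'⟩
      · rcases Set.mem_singleton_iff.1 hq with rfl
        rcases hs with rfl | rfl | rfl
        · exact ⟨_, _, _, _, rfl⟩
        · exact ⟨_, _, _, _, rfl⟩
        · exact ⟨_, _, _, _, rfl⟩
    · show (upR R ∪ {s}).ncard = 1 * (β + 1)
      rw [Set.union_singleton, Set.ncard_insert_of_notMem ?_ (Set.toFinite _),
        kb_upR_ncard, hcard]
      · ring
      · rintro ⟨q₀, _, rfl⟩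
        exact kb_not_new_upSq q₀ hnew
    · show link (upR R ∪ {s}) = Set.univ
      rw [kb_link_union, kb_link_singleton]
      apply Set.eq_univ_of_forall
      rintro ⟨x, y⟩
      by_cases hy : y.1 = Fin.last β
      · exact Or.inr (kb_new_edges_psi1 hs x y hy)
      · obtain ⟨z, rfl⟩ := kb_old_case hy
        refine Or.inl ?_
        rw [kb_link_upR]
        exact ⟨(x, z), by rw [hlink]; trivial, rfl⟩
  · -- psi2 case
    obtain ⟨a, b, a', b', hq, rfl⟩ := kb_psi2_iff.1 hU
    set q := square a b a' b' with hqdef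
    have hβ1 : 1 ≤ β := by
      have := (Set.ncard_pos (Set.toFinite R)).2 ⟨q, hq⟩
      omega
    have hnew1 : kbNew (square a (bn β) a' (up b')) := kb_new_left rfl
    have hnew2 : kbNew (square a (up b) a' (iv (bn β))) := kb_new_right rfl
    refine ⟨?_, ?_, ?_⟩
    · rintro p (⟨p₀, hp₀, rfl⟩ | hp)
      · obtain ⟨c, d, c', d', rfl⟩ := hsq p₀ hp₀.1
        exact ⟨c, up d, c', up d', kb_upSq_square c c' d d'⟩
      · rcases hp with rfl | rfl
        · exact ⟨_, _, _, _, rfl⟩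
        · exact ⟨_, _, _, _, rfl⟩
    · have h2 : ({square a (bn β) a' (up b'), square a (up b) a' (iv (bn β))} :
          Set (Set (Tup 1 (β + 1)))).ncard = 2 := Set.ncard_pair (kb_s1_ne_s2 a a' b b')
      rw [Set.ncard_union_eq ?_ (Set.toFinite _) (Set.toFinite _), h2, kb_upR_ncard,
        Set.ncard_diff_singleton_of_mem hq, hcard]
      · omega
      · rw [Set.disjoint_right]
        rintro p (rfl | rfl) ⟨p₀, _, hup⟩
        · exact kb_not_new_upSq p₀ (by rw [hup]; exact hnew1)
        · exact kb_not_new_upSq p₀ (by rw [hup]; exact hnew2)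
    · rw [show ({square a (bn β) a' (up b'), square a (up b) a' (iv (bn β))} :
          Set (Set (Tup 1 (β + 1)))) = {square a (bn β) a' (up b')} ∪
            {square a (up b) a' (iv (bn β))} by rw [Set.singleton_union]]
      rw [kb_link_union, kb_link_union, kb_link_singleton, kb_link_singleton]
      apply Set.eq_univ_of_forall
      rintro ⟨x, y⟩
      by_cases hy : y.1 = Fin.last β
      · rcases kb_v1_dich a a' with h3 | h3 <;>
          rcases kb_v1_dich a x with h1 | h1 <;>
            rcases kb_new_cases hy with h2 | h2 <;>
              rw [h1, h2, h3] <;> simp [kbE_square, Set.mem_union]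
      · obtain ⟨z, rfl⟩ := kb_old_case hy
        have hz : (x, z) ∈ link R := by rw [hlink]; trivial
        have hsplit : link R = link (R \ {q}) ∪ kbE q := by
          conv_lhs => rw [show R = (R \ {q}) ∪ {q} by
            rw [Set.diff_union_self, Set.union_eq_self_of_subset_right (by simpa using hq)]]
          rw [kb_link_union, kb_link_singleton]
        rw [hsplit] at hz
        rcases hz with hz | hz
        · refine Set.mem_union_left _ ?_
          rw [kb_link_upR]
          exact ⟨(x, z), hz, rfl⟩
        · rw [hqdef, kbE_square] at hz
          simp only [Set.mem_insert_iff, Set.mem_singleton_iff] at hz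
          rcases hz with hz | hz | hz | hz <;>
            (injection hz with h1 h2; subst h1; subst h2) <;> simp [kbE_square, Set.mem_union]

end Toolkit5
section Toolkit6
variable {β : ℕ}

lemma kb_normalize {α β : ℕ} {c c' : V α} {d d' : V β} {x : V α} {y : V β}
    (h : (x, y) ∈ kbE (square c d c' d')) :
    ∃ w z, square c d c' d' = square (iv x) y w z := by
  rw [kbE_square] at h
  simp only [Set.mem_insert_iff, Set.mem_singleton_iff, Prod.mk.injEq] at h
  rcases h with ⟨h1, h2⟩ | ⟨h1, h2⟩ | ⟨h1, h2⟩ | ⟨h1, h2⟩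
  · exact ⟨c', d', by rw [h1, h2, kb_iv_iv]⟩
  · exact ⟨c, d, by rw [h1, h2, kb_iv_iv]; exact (kb_square_swap c c' d d').symm⟩
  · exact ⟨iv c', iv d, by rw [h1, h2]; exact (kb_square_iv c c' d d').symm⟩
  · exact ⟨iv c, iv d', by rw [h1, h2]; exact (kb_square_iv' c c' d d').symm⟩

lemma kb_down {p : Set (Tup 1 (β + 1))} (hp : ∃ a b a' b', p = square a b a' b')
    (hnew : ¬ kbNew p) :
    ∃ q, (∃ a b a' b', q = square a b a' b') ∧ p = upSq q := by
  obtain ⟨c, d, c', d', rfl⟩ := hp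
  have hd : d.1 ≠ Fin.last β := fun h => hnew (kb_new_left h)
  have hd' : d'.1 ≠ Fin.last β := fun h => hnew (kb_new_right h)
  obtain ⟨e, rfl⟩ := kb_old_case hd
  obtain ⟨e', rfl⟩ := kb_old_case hd'
  exact ⟨square c e c' e', ⟨c, e, c', e', rfl⟩, (kb_upSq_square c c' e e').symm⟩

lemma kb_classify {S : Set (Set (Tup 1 (β + 1)))} (hS : IsBM 1 (β + 1) S) :
    ∃ R, IsBM 1 β R ∧ S ∈ psi β R := by
  classical
  obtain ⟨hsq, hcard, hlink⟩ := hS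
  have hcard' : S.ncard = β + 1 := by rw [hcard]; ring
  have hedge := kb_edge_lemma hsq hcard' hlink
  -- the square q1 covering the edge (iv a1, bn β)
  have h1 : ((iv a1, bn β) : V 1 × V (β + 1)) ∈ link S := by rw [hlink]; trivial
  rw [kb_link_eq] at h1
  obtain ⟨q1, hq1S, hq1e⟩ : ∃ q ∈ S, ((iv a1, bn β) : V 1 × V (β + 1)) ∈ kbE q := by
    simpa using h1
  obtain ⟨a', b', hq1⟩ : ∃ a' b', q1 = square a1 (bn β) a' b' := by
    obtain ⟨c, d, c', d', rfl⟩ := hsq q1 hq1S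
    obtain ⟨w, z, h⟩ := kb_normalize hq1e
    simp only [kb_iv_iv] at h
    exact ⟨w, z, h⟩
  set T0 : Set (Set (Tup 1 β)) := upSq ⁻¹' S with hT0
  have hT0sq : ∀ q ∈ T0, ∃ a b a' b', q = square a b a' b' := by
    intro q hq
    obtain ⟨q', hq'sq, hq'⟩ := kb_down (hsq (upSq q) hq) (kb_not_new_upSq q)
    obtain rfl := kb_upSq_inj hq'
    exact hq'sq
  have hT0link : ∀ x : V 1, ∀ y : V β, (x, up y) ∈ link (upR T0) → (x, y) ∈ link T0 := by
    intro x y h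
    rw [kb_link_upR] at h
    obtain ⟨f, hf, heq⟩ := h
    simp only [Prod.mk.injEq, kb_up_inj] at heq
    obtain ⟨h1, h2⟩ := heq
    have : f = (x, y) := Prod.ext h1 h2
    rwa [this] at hf
  by_cases hb' : b'.1 = Fin.last β
  · -- CASE I : psi1
    have hq13 : q1 = square a1 (bn β) (iv a1) (iv (bn β)) ∨
        q1 = square a1 (bn β) a1 (iv (bn β)) ∨ q1 = square a1 (bn β) (iv a1) (bn β) := by
      rcases kb_new_cases hb' with rfl | rfl
      · -- b' = bn β : need a' = iv a1
        have h4 := (hedge q1 hq1S).1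
        rw [hq1, kbE_square] at h4
        have hdist := (kb_four_distinct h4).1
        have ha' : a' ≠ a1 := by
          intro h; subst h; exact hdist (by simp)
        rcases kb_v1_cases a' with h | h
        · exact absurd h ha'
        · subst h; exact Or.inr (Or.inr hq1)
      · rcases kb_v1_cases a' with h | h
        · subst h; exact Or.inr (Or.inl hq1)
        · subst h; exact Or.inl hq1
    have hq1new : kbNew q1 := by rw [hq1]; exact kb_new_left rfl
    have hother : ∀ p ∈ S, p ≠ q1 → ¬ kbNew p := by
      rintro p hp hne ⟨t, ht, hlast⟩
      have hep : (iv t.1, t.2.1) ∈ kbE p := ⟨t, ht, rfl⟩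
      have heq1 : (iv t.1, t.2.1) ∈ kbE q1 := kb_new_edges_psi1 hq13 _ _ hlast
      exact hne ((hedge p hp).2 q1 hq1S _ hep heq1)
    have hSdec : S = upR T0 ∪ {q1} := by
      apply Set.eq_of_subset_of_subset
      · intro p hp
        by_cases hpe : p = q1
        · exact Or.inr hpe
        · obtain ⟨q, _, rfl⟩ := kb_down (hsq p hp) (hother p hp hpe)
          exact Or.inl ⟨q, hp, rfl⟩
      · rintro p (⟨q, hq, rfl⟩ | rfl)
        · exact hq
        · exact hq1S
    have hq1notup : (q1 : Set (Tup 1 (β + 1))) ∉ upR T0 := by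
      rintro ⟨q, _, hup⟩
      exact kb_not_new_upSq q (by rw [hup]; exact hq1new)
    have hT0card : T0.ncard = β := by
      have : S.ncard = (upR T0).ncard + 1 := by
        rw [hSdec, Set.union_singleton, Set.ncard_insert_of_notMem hq1notup (Set.toFinite _)]
      rw [hcard', kb_upR_ncard] at this
      omega
    refine ⟨T0, ⟨hT0sq, by rw [hT0card]; ring, ?_⟩, ?_⟩
    · -- link T0 = univ
      apply Set.eq_univ_of_forall
      rintro ⟨x, y⟩
      have h : (x, up y) ∈ link S := by rw [hlink]; trivial
      rw [hSdec, Set.union_singleton, kb_link_insert] at h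
      rcases h with h | h
      · exfalso
        rcases hq13 with rfl | rfl | rfl <;>
          (rw [kbE_square] at h;
           simp only [Set.mem_insert_iff, Set.mem_singleton_iff, Prod.mk.injEq] at h) <;>
          simp at h
      · exact hT0link x y h
    · -- S ∈ psi1
      left
      exact ⟨q1, by simpa using hq13, hSdec.symm⟩
  · -- CASE II : psi2
    obtain ⟨c', rfl⟩ := kb_old_case hb'
    -- q2 : the square covering (a1, bn β)
    have h2 : ((a1, bn β) : V 1 × V (β + 1)) ∈ link S := by rw [hlink]; trivial
    rw [kb_link_eq] at h2
    obtain ⟨q2, hq2S, hq2e⟩ : ∃ q ∈ S, ((a1, bn β) : V 1 × V (β + 1)) ∈ kbE q := by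
      simpa using h2
    have hne12 : q1 ≠ q2 := by
      intro h
      rw [← h, hq1, kbE_square] at hq2e
      simp at hq2e
    obtain ⟨e, a'', hq2⟩ : ∃ e a'', q2 = square a1 e a'' (iv (bn β)) := by
      obtain ⟨f, g, f', g', rfl⟩ := hsq q2 hq2S
      obtain ⟨w, z, h⟩ := kb_normalize hq2e
      refine ⟨iv z, iv w, ?_⟩
      rw [h, ← kb_square_iv a1 (iv w) (iv z) (iv (bn β))]
      simp
    -- e is an old letter
    have he_old : e.1 ≠ Fin.last β := by
      intro he
      rcases kb_new_cases he with rfl | rfl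
      · apply hne12
        refine (hedge q1 hq1S).2 q2 hq2S (iv a1, bn β) ?_ ?_
        · rw [hq1, kbE_square]; simp
        · rw [hq2, kbE_square]; simp
      · have h4 := (hedge q2 hq2S).1
        rw [hq2, kbE_square] at h4
        have hdist := (kb_four_distinct h4).1
        have ha'' : a'' = iv a1 := by
          rcases kb_v1_cases a'' with h | h
          · exfalso; apply hdist; rw [h]
          · exact h
        apply hne12
        refine (hedge q1 hq1S).2 q2 hq2S (iv a1, bn β) ?_ ?_
        · rw [hq1, kbE_square]; simp
        · rw [hq2, kbE_square, ha'']; simp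
    obtain ⟨c, rfl⟩ := kb_old_case he_old
    -- a'' = a'
    have ha'' : a'' = a' := by
      rcases kb_v1_dich a' a'' with h | h
      · exact h
      · exfalso
        apply hne12
        refine (hedge q1 hq1S).2 q2 hq2S (a', iv (bn β)) ?_ ?_
        · rw [hq1, kbE_square]; simp
        · rw [hq2, kbE_square, h]; simp
    rw [ha''] at hq2
    have hq1new : kbNew q1 := by rw [hq1]; exact kb_new_left rfl
    have hq2new : kbNew q2 := by rw [hq2]; exact kb_new_right rfl
    -- every other square is old
    have hother : ∀ p ∈ S, p ≠ q1 → p ≠ q2 → ¬ kbNew p := by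
      rintro p hp hne1 hne2 ⟨t, ht, hlast⟩
      have hep : (iv t.1, t.2.1) ∈ kbE p := ⟨t, ht, rfl⟩
      rcases kb_v1_dich a' (iv t.1) with hx | hx <;> rcases kb_new_cases hlast with hy | hy
      · -- (a', bn β) : which is (a1,bn) or (iva1,bn) depending... handle via a1-dichotomy below
        rcases kb_v1_cases (iv t.1) with hx1 | hx1
        · apply hne2; refine (hedge p hp).2 q2 hq2S _ hep ?_
          rw [hx1, hy, hq2, kbE_square]; simp
        · apply hne1; refine (hedge p hp).2 q1 hq1S _ hep ?_
          rw [hx1, hy, hq1, kbE_square]; simp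
      · apply hne1; refine (hedge p hp).2 q1 hq1S _ hep ?_
        rw [hx, hy, hq1, kbE_square]; simp
      · rcases kb_v1_cases (iv t.1) with hx1 | hx1
        · apply hne2; refine (hedge p hp).2 q2 hq2S _ hep ?_
          rw [hx1, hy, hq2, kbE_square]; simp
        · apply hne1; refine (hedge p hp).2 q1 hq1S _ hep ?_
          rw [hx1, hy, hq1, kbE_square]; simp
      · apply hne2; refine (hedge p hp).2 q2 hq2S _ hep ?_
        rw [hx, hy, hq2, kbE_square]; simp
    have hSdec : S = upR T0 ∪ {q1, q2} := by
      apply Set.eq_of_subset_of_subset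
      · intro p hp
        by_cases hp1 : p = q1
        · exact Or.inr (Or.inl hp1)
        by_cases hp2 : p = q2
        · exact Or.inr (Or.inr hp2)
        obtain ⟨q, _, rfl⟩ := kb_down (hsq p hp) (hother p hp hp1 hp2)
        exact Or.inl ⟨q, hp, rfl⟩
      · rintro p (⟨q, hq, rfl⟩ | rfl | rfl)
        · exact hq
        · exact hq1S
        · exact hq2S
    have hnotup : ∀ p, kbNew p → p ∉ upR T0 := by
      intro p hnew hmem
      obtain ⟨q, -, hup⟩ := hmem
      exact kb_not_new_upSq q (by rw [hup]; exact hnew)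
    have hT0card : T0.ncard = β - 1 ∧ 1 ≤ β := by
      have hd : Disjoint (upR T0) {q1, q2} := by
        rw [Set.disjoint_right]
        rintro p (rfl | rfl)
        · exact hnotup _ hq1new
        · exact hnotup _ hq2new
      have : S.ncard = (upR T0).ncard + 2 := by
        rw [hSdec, Set.ncard_union_eq hd (Set.toFinite _) (Set.toFinite _),
          Set.ncard_pair hne12]
      rw [hcard', kb_upR_ncard] at this
      have hge : 2 ≤ β + 1 := by
        have h2le : ({q1, q2} : Set (Set (Tup 1 (β + 1)))).ncard ≤ S.ncard :=
          Set.ncard_le_ncard (by rintro p (rfl | rfl); exacts [hq1S, hq2S]) (Set.toFinite _)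
        rw [hcard', Set.ncard_pair hne12] at h2le
        exact h2le
      omega
    set q0 : Set (Tup 1 β) := square a1 c a' c' with hq0
    have hq0notT0 : q0 ∉ T0 := by
      intro hmem
      have hup : upSq q0 ∈ S := hmem
      have := (hedge (upSq q0) hup).2 q2 hq2S (iv a1, up c) ?_ ?_
      · exact kb_not_new_upSq q0 (by rw [this]; exact hq2new)
      · rw [hq0, kb_upSq_square, kbE_square]; simp
      · rw [hq2, kbE_square]; simp
    refine ⟨insert q0 T0, ⟨?_, ?_, ?_⟩, ?_⟩
    · rintro q (rfl | hq)
      · exact ⟨a1, c, a', c', rfl⟩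
      · exact hT0sq q hq
    · rw [Set.ncard_insert_of_notMem hq0notT0 (Set.toFinite _), hT0card.1]
      have := hT0card.2
      omega
    · -- link (insert q0 T0) = univ
      apply Set.eq_univ_of_forall
      rintro ⟨x, y⟩
      have h : (x, up y) ∈ link S := by rw [hlink]; trivial
      rw [hSdec, show ({q1, q2} : Set (Set (Tup 1 (β + 1)))) = {q1} ∪ {q2} from rfl,
        kb_link_union, kb_link_union, kb_link_singleton, kb_link_singleton] at h
      rw [kb_link_insert]
      rcases h with h | h | h
      · exact Or.inr (hT0link x y h)
      · rw [hq1, kbE_square] at h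
        simp only [Set.mem_insert_iff, Set.mem_singleton_iff, Prod.mk.injEq] at h
        rcases h with ⟨h1, h2⟩ | ⟨h1, h2⟩ | ⟨h1, h2⟩ | ⟨h1, h2⟩
        · exact absurd h2 (kb_up_ne_bn y)
        · left
          rw [hq0, kbE_square, h1, kb_up_inj.1 h2]
          simp
        · left
          rw [← kb_up_iv] at h2
          rw [hq0, kbE_square, h1, kb_up_inj.1 h2]
          simp
        · exact absurd h2 (kb_up_ne_ivbn y)
      · rw [hq2, kbE_square] at h
        simp only [Set.mem_insert_iff, Set.mem_singleton_iff, Prod.mk.injEq] at h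
        rcases h with ⟨h1, h2⟩ | ⟨h1, h2⟩ | ⟨h1, h2⟩ | ⟨h1, h2⟩
        · left
          rw [hq0, kbE_square, h1, kb_up_inj.1 h2]
          simp
        · exact absurd h2 (kb_up_ne_ivbn y)
        · exact absurd h2 (kb_up_ne_bn y)
        · left
          rw [← kb_up_iv] at h2
          rw [hq0, kbE_square, h1, kb_up_inj.1 h2]
          simp
    · -- S ∈ psi2
      right
      rw [kb_psi2_iff]
      refine ⟨a1, c, a', c', Set.mem_insert _ _, ?_⟩
      rw [show insert q0 T0 \ {q0} = T0 from
        Set.insert_diff_self_of_notMem hq0notT0]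
      rw [hSdec, hq1, hq2]
end Toolkit6
section Toolkit7
variable {β : ℕ}

@[simp] lemma kb_up_eq_iv_up {x y : V β} : up x = iv (up y) ↔ x = iv y := by
  simp [up, iv, Prod.ext_iff, Fin.castSucc_inj]

@[simp] lemma kb_iv_up_eq_up {x y : V β} : iv (up x) = up y ↔ iv x = y := by
  constructor
  · intro h; exact (kb_up_eq_iv_up.1 h.symm).symm
  · rintro rfl; simp

/-- the fibre of psi2 over one square of R -/
def kbP (β : ℕ) (R : Set (Set (Tup 1 β))) (q : Set (Tup 1 β)) :
    Set (Set (Set (Tup 1 (β + 1)))) :=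
  {U | ∃ a b a' b', square a b a' b' = q ∧
    U = upR (R \ {q}) ∪ {square a (bn β) a' (up b'), square a (up b) a' (iv (bn β))}}

lemma kb_psi2_biUnion (R : Set (Set (Tup 1 β))) : psi2 β R = ⋃ q ∈ R, kbP β R q := by
  ext U
  rw [Set.mem_iUnion₂]
  constructor
  · intro hU
    obtain ⟨a, b, a', b', hmem, hU⟩ := kb_psi2_iff.1 hU
    exact ⟨square a b a' b', hmem, a, b, a', b', rfl, hU⟩
  · rintro ⟨q, hq, a, b, a', b', hsq, hU⟩
    rw [kb_psi2_iff]
    exact ⟨a, b, a', b', by rw [hsq]; exact hq, by rw [hU, hsq]⟩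

lemma kb_K_new (a a' : V 1) (b b' : V β) :
    ∀ s ∈ ({square a (bn β) a' (up b'), square a (up b) a' (iv (bn β))} :
      Set (Set (Tup 1 (β + 1)))), kbNew s := by
  rintro s (rfl | rfl)
  · exact kb_new_left rfl
  · exact kb_new_right rfl

lemma kb_pair_ne {a a' : V 1} {b b' : V β} (h : ¬(a = a' ∧ b = b')) :
    ({square a (bn β) a' (up b'), square a (up b) a' (iv (bn β))} :
        Set (Set (Tup 1 (β + 1)))) ≠
      {square a' (bn β) a (up b), square a' (up b') a (iv (bn β))} := by
  intro hK
  have hm : square a (bn β) a' (up b') ∈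
      ({square a' (bn β) a (up b), square a' (up b') a (iv (bn β))} :
        Set (Set (Tup 1 (β + 1)))) := by
    rw [← hK]; left; rfl
  rcases hm with h1 | h1
  · rcases kb_square_eq_iff.1 h1 with h2 | h2 | h2 | h2 <;>
      simp only [Prod.mk.injEq] at h2 <;> simp at h2
    exact h ⟨h2.1, h2.2.2.symm⟩
  · rw [Set.mem_singleton_iff] at h1
    rcases kb_square_eq_iff.1 h1 with h2 | h2 | h2 | h2 <;>
      simp only [Prod.mk.injEq] at h2 <;> simp at h2

/-- the key recovered-square lemma: equal new parts force equal old squares -/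
lemma kb_K_inj {a a' c c' : V 1} {b b' d d' : V β}
    (hK : ({square a (bn β) a' (up b'), square a (up b) a' (iv (bn β))} :
        Set (Set (Tup 1 (β + 1)))) =
      {square c (bn β) c' (up d'), square c (up d) c' (iv (bn β))}) :
    square a b a' b' = square c d c' d' := by
  have h1 : square a (bn β) a' (up b') ∈
      ({square c (bn β) c' (up d'), square c (up d) c' (iv (bn β))} :
        Set (Set (Tup 1 (β + 1)))) := by rw [← hK]; left; rfl
  have h2 : square a (up b) a' (iv (bn β)) ∈
      ({square c (bn β) c' (up d'), square c (up d) c' (iv (bn β))} :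
        Set (Set (Tup 1 (β + 1)))) := by rw [← hK]; right; rfl
  rw [Set.mem_insert_iff, Set.mem_singleton_iff] at h1 h2
  rcases h1 with h1 | h1
  · -- case A : a = c, a' = c', b' = d'
    have hA : a = c ∧ a' = c' ∧ b' = d' := by
      rcases kb_square_eq_iff.1 h1 with h | h | h | h <;>
        simp only [Prod.mk.injEq] at h <;> simp at h
      exact ⟨h.1, h.2.1, h.2.2⟩
    obtain ⟨rfl, rfl, rfl⟩ := hA
    rcases h2 with h2 | h2
    · rcases kb_square_eq_iff.1 h2 with h | h | h | h <;>
        simp only [Prod.mk.injEq] at h <;> simp at h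
    · have hB : b = d := by
        rcases kb_square_eq_iff.1 h2 with h | h | h | h <;>
          simp only [Prod.mk.injEq] at h <;> simp at h
        exact h
      rw [hB]
  · -- case B : a = iv c, a' = iv c', b' = iv d, b = iv d'
    have hA : a = iv c ∧ a' = iv c' ∧ b' = iv d := by
      rcases kb_square_eq_iff.1 h1 with h | h | h | h <;>
        simp only [Prod.mk.injEq] at h <;> simp at h
      exact ⟨h.1, h.2.1, h.2.2⟩
    obtain ⟨rfl, rfl, rfl⟩ := hA
    rcases h2 with h2 | h2
    · have hB : b = iv d' := by
        rcases kb_square_eq_iff.1 h2 with h | h | h | h <;>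
          simp only [Prod.mk.injEq] at h <;> simp at h
        exact h
      rw [hB]
      exact kb_square_iv c c' d d'
    · rcases kb_square_eq_iff.1 h2 with h | h | h | h <;>
        simp only [Prod.mk.injEq] at h <;> simp at h

end Toolkit7
section Toolkit8
variable {β : ℕ}

lemma kb_psi1_card (R : Set (Set (Tup 1 β))) : (psi1 β R).ncard = 3 := by
  have hne12 : square a1 (bn β) (iv a1) (iv (bn β)) ≠ square a1 (bn β) a1 (iv (bn β)) := by
    intro h; rcases kb_square_eq_iff.1 h with h | h | h | h <;>
      simp only [Prod.mk.injEq] at h <;> simp at h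
  have hne13 : square a1 (bn β) (iv a1) (iv (bn β)) ≠ square a1 (bn β) (iv a1) (bn β) := by
    intro h; rcases kb_square_eq_iff.1 h with h | h | h | h <;>
      simp only [Prod.mk.injEq] at h <;> simp at h
  have hne23 : square a1 (bn β) a1 (iv (bn β)) ≠ square a1 (bn β) (iv a1) (bn β) := by
    intro h; rcases kb_square_eq_iff.1 h with h | h | h | h <;>
      simp only [Prod.mk.injEq] at h <;> simp at h
  have hnew : ∀ s ∈ ({square a1 (bn β) (iv a1) (iv (bn β)), square a1 (bn β) a1 (iv (bn β)),
      square a1 (bn β) (iv a1) (bn β)} : Set (Set (Tup 1 (β + 1)))), kbNew s := by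
    rintro s (rfl | rfl | rfl) <;> exact kb_new_left rfl
  rw [psi1, Set.ncard_image_of_injOn ?_]
  · rw [Set.ncard_insert_of_notMem ?_ (Set.toFinite _), Set.ncard_pair hne23]
    simp only [Set.mem_insert_iff, Set.mem_singleton_iff]
    push_neg
    exact ⟨hne12, hne13⟩
  · intro s hs s' hs' h
    have := kb_union_eq_union (T := R) (T' := R) (K := {s}) (K' := {s'})
      (by rintro x rfl; exact hnew _ hs) (by rintro x rfl; exact hnew _ hs') h
    simpa using this.2

lemma kb_kbP_eq {R : Set (Set (Tup 1 β))} {q : Set (Tup 1 β)} {a a' : V 1} {b b' : V β}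
    (hq : q = square a b a' b') :
    kbP β R q = {upR (R \ {q}) ∪ {square a (bn β) a' (up b'), square a (up b) a' (iv (bn β))},
      upR (R \ {q}) ∪ {square a' (bn β) a (up b), square a' (up b') a (iv (bn β))}} := by
  apply Set.eq_of_subset_of_subset
  · rintro U ⟨c, d, c', d', hsq', rfl⟩
    rw [hq] at hsq'
    rcases kb_square_eq_iff.1 hsq' with h | h | h | h <;>
        simp only [Prod.mk.injEq] at h <;> obtain ⟨rfl, rfl, rfl, rfl⟩ := h
    · left; rfl
    · right; rfl
    · left
      rw [show square (iv a) (bn β) (iv a') (up (iv b)) = square a (up b) a' (iv (bn β)) from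
          by simp [kb_square_eq_iff],
        show square (iv a) (up (iv b')) (iv a') (iv (bn β)) = square a (bn β) a' (up b') from
          by simp [kb_square_eq_iff],
        Set.pair_comm]
    · right
      rw [show square (iv a') (bn β) (iv a) (up (iv b')) = square a' (up b') a (iv (bn β)) from
          by simp [kb_square_eq_iff],
        show square (iv a') (up (iv b)) (iv a) (iv (bn β)) = square a' (bn β) a (up b) from
          by simp [kb_square_eq_iff],
        Set.pair_comm]
      rfl
  · rintro U (rfl | rfl)
    · exact ⟨a, b, a', b', hq.symm, rfl⟩
    · exact ⟨a', b', a, b, by rw [kb_square_swap]; exact hq.symm, rfl⟩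

lemma kb_kbP_card {R : Set (Set (Tup 1 β))} (hBM : IsBM 1 β R) :
    ∀ q ∈ R, (kbP β R q).ncard = 2 := by
  obtain ⟨hsq, hcard, hlink⟩ := hBM
  have hedgeR := kb_edge_lemma hsq (by rw [hcard]; ring) hlink
  intro q hqR
  obtain ⟨a, b, a', b', hq⟩ := hsq q hqR
  have hne : ¬(a = a' ∧ b = b') := by
    rintro ⟨rfl, rfl⟩
    have h4 := (hedgeR q hqR).1
    rw [hq, kbE_square] at h4
    exact (kb_four_distinct h4).1 rfl
  rw [kb_kbP_eq hq]
  refine Set.ncard_pair ?_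
  intro hU
  have := kb_union_eq_union (kb_K_new a a' b b')
    (by rintro s (rfl | rfl); exacts [kb_new_left rfl, kb_new_right rfl]) hU
  exact kb_pair_ne hne this.2

lemma kb_kbP_disj {R : Set (Set (Tup 1 β))} :
    ∀ q ∈ R, ∀ q' ∈ R, q ≠ q' → Disjoint (kbP β R q) (kbP β R q') := by
  intro q hq q' hq' hne
  rw [Set.disjoint_left]
  rintro U ⟨a, b, a', b', hsq, rfl⟩ ⟨c, d, c', d', hsq', hU'⟩
  have := kb_union_eq_union (kb_K_new a a' b b') (kb_K_new c c' d d') hU'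
  have hdiff : R \ {q} = R \ {q'} := this.1
  have : q' ∈ R \ {q} := ⟨hq', fun h => hne (by simpa using h.symm)⟩
  rw [hdiff] at this
  exact this.2 rfl

lemma kb_psi2_card {R : Set (Set (Tup 1 β))} (hBM : IsBM 1 β R) :
    (psi2 β R).ncard = 2 * β := by
  rw [kb_psi2_biUnion,
    kb_ncard_biUnion 2 R (Set.toFinite R) _ (kb_kbP_card hBM) kb_kbP_disj, hBM.2.1]
  ring

lemma kb_psi1_mem_iff {R : Set (Set (Tup 1 β))} {U : Set (Set (Tup 1 (β + 1)))} :
    U ∈ psi1 β R ↔ ∃ s, (s = square a1 (bn β) (iv a1) (iv (bn β)) ∨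
      s = square a1 (bn β) a1 (iv (bn β)) ∨ s = square a1 (bn β) (iv a1) (bn β)) ∧
      U = upR R ∪ {s} := by
  constructor
  · rintro ⟨s, hs, rfl⟩
    exact ⟨s, by simpa using hs, rfl⟩
  · rintro ⟨s, hs, rfl⟩
    exact ⟨s, by simpa using hs, rfl⟩

lemma kb_psi_card {R : Set (Set (Tup 1 β))} (hBM : IsBM 1 β R) :
    (psi β R).ncard = 2 * β + 3 := by
  have hd : Disjoint (psi1 β R) (psi2 β R) := by
    rw [Set.disjoint_left]
    intro U hU1 hU2
    obtain ⟨s, hs, rfl⟩ := kb_psi1_mem_iff.1 hU1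
    obtain ⟨a, b, a', b', hqR, hU⟩ := kb_psi2_iff.1 hU2
    have := kb_union_eq_union
      (K := {s}) (by rintro x rfl; rcases hs with rfl | rfl | rfl <;> exact kb_new_left rfl)
      (kb_K_new a a' b b') hU
    have hR : R = R \ {square a b a' b'} := this.1
    have : square a b a' b' ∈ R \ {square a b a' b'} := by rw [← hR]; exact hqR
    exact this.2 rfl
  rw [psi, Set.ncard_union_eq hd (Set.toFinite _) (Set.toFinite _), kb_psi1_card,
    kb_psi2_card hBM]
  ring

lemma kb_psi_disj {R R' : Set (Set (Tup 1 β))} (hBM : IsBM 1 β R) (hBM' : IsBM 1 β R')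
    (hne : R ≠ R') : Disjoint (psi β R) (psi β R') := by
  rw [Set.disjoint_left]
  rintro U hU hU'
  apply hne
  have hcard := hBM.2.1
  have hcard' := hBM'.2.1
  rcases hU with hU | hU <;> rcases hU' with hU' | hU'
  · obtain ⟨s, hs, rfl⟩ := kb_psi1_mem_iff.1 hU
    obtain ⟨s', hs', hUe⟩ := kb_psi1_mem_iff.1 hU'
    have := kb_union_eq_union
      (K := {s}) (by rintro x rfl; rcases hs with rfl | rfl | rfl <;> exact kb_new_left rfl)
      (K' := {s'}) (by rintro x rfl; rcases hs' with rfl | rfl | rfl <;> exact kb_new_left rfl)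
      hUe
    exact this.1
  · exfalso
    obtain ⟨s, hs, rfl⟩ := kb_psi1_mem_iff.1 hU
    obtain ⟨a, b, a', b', hqR', hUe⟩ := kb_psi2_iff.1 hU'
    have := kb_union_eq_union
      (K := {s}) (by rintro x rfl; rcases hs with rfl | rfl | rfl <;> exact kb_new_left rfl)
      (kb_K_new a a' b b') hUe
    have h1 : R.ncard = (R' \ {square a b a' b'}).ncard := by rw [this.1]
    rw [hcard, Set.ncard_diff_singleton_of_mem hqR', hcard'] at h1
    have hβ : 1 ≤ β := by
      have := (Set.ncard_pos (Set.toFinite R')).2 ⟨_, hqR'⟩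
      omega
    omega
  · exfalso
    obtain ⟨s, hs, hUe0⟩ := kb_psi1_mem_iff.1 hU'
    obtain ⟨a, b, a', b', hqR, hUe⟩ := kb_psi2_iff.1 hU
    have := kb_union_eq_union (kb_K_new a a' b b')
      (K' := {s}) (by rintro x rfl; rcases hs with rfl | rfl | rfl <;> exact kb_new_left rfl)
      (hUe.symm.trans hUe0)
    have h1 : (R \ {square a b a' b'}).ncard = R'.ncard := by rw [this.1]
    rw [Set.ncard_diff_singleton_of_mem hqR, hcard, hcard'] at h1
    have hβ : 1 ≤ β := by
      have := (Set.ncard_pos (Set.toFinite R)).2 ⟨_, hqR⟩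
      omega
    omega
  · obtain ⟨a, b, a', b', hqR, hUe⟩ := kb_psi2_iff.1 hU
    obtain ⟨c, d, c', d', hqR', hUe'⟩ := kb_psi2_iff.1 hU'
    rw [hUe] at hUe'
    have := kb_union_eq_union (kb_K_new a a' b b') (kb_K_new c c' d d') hUe'
    have hqq : square a b a' b' = square c d c' d' := kb_K_inj this.2
    have h1 : R = insert (square a b a' b') (R \ {square a b a' b'}) := by
      rw [Set.insert_diff_singleton, Set.insert_eq_self.2 hqR]
    have h2 : R' = insert (square c d c' d') (R' \ {square c d c' d'}) := by
      rw [Set.insert_diff_singleton, Set.insert_eq_self.2 hqR']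
    have hd := this.1
    rw [← hqq] at hd
    rw [h1, h2, ← hqq, hd]

end Toolkit8
section Final

lemma kb_step (β : ℕ) : {S : Set (Set (Tup 1 (β + 1))) | IsBM 1 (β + 1) S}.ncard =
    (2 * β + 3) * {R : Set (Set (Tup 1 β)) | IsBM 1 β R}.ncard := by
  have hU : {S : Set (Set (Tup 1 (β + 1))) | IsBM 1 (β + 1) S} =
      ⋃ R ∈ {R : Set (Set (Tup 1 β)) | IsBM 1 β R}, psi β R := by
    ext S
    simp only [Set.mem_setOf_eq, Set.mem_iUnion₂]
    constructor
    · intro hS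
      obtain ⟨R, hR, hmem⟩ := kb_classify hS
      exact ⟨R, hR, hmem⟩
    · rintro ⟨R, hR, hmem⟩
      exact kb_psi_isBM hR S hmem
  rw [hU]
  exact kb_ncard_biUnion (2 * β + 3) _ (Set.toFinite _) _
    (fun R hR => kb_psi_card hR) (fun R hR R' hR' hne => kb_psi_disj hR hR' hne)

lemma kb_base : {R : Set (Set (Tup 1 0)) | IsBM 1 0 R}.ncard = 1 := by
  have : {R : Set (Set (Tup 1 0)) | IsBM 1 0 R} = {∅} := by
    ext R
    simp only [Set.mem_setOf_eq, Set.mem_singleton_iff]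
    constructor
    · rintro ⟨-, hcard, -⟩
      exact (Set.ncard_eq_zero (Set.toFinite R)).1 (by rw [hcard])
    · rintro rfl
      refine ⟨by simp, by simp, ?_⟩
      have h1 : link (∅ : Set (Set (Tup 1 0))) = ∅ := by
        ext e; simp [link]
      have h2 : (Set.univ : Set (V 1 × V 0)) = ∅ := by
        have : IsEmpty (V 1 × V 0) := by
          have : IsEmpty (V 0) := by
            constructor; rintro ⟨⟨i, hi⟩, -⟩; omega
          infer_instance
        exact Set.univ_eq_empty_iff.2 this
      rw [h1, h2]
  rw [this]
  simp

lemma kb_count (β : ℕ) : {R : Set (Set (Tup 1 β)) | IsBM 1 β R}.ncard =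
    ∏ i ∈ Finset.Icc 1 β, (2 * i + 1) := by
  induction β with
  | zero => rw [kb_base]; simp
  | succ n ih =>
    rw [kb_step n, ih, Finset.prod_Icc_succ_top (by omega : 1 ≤ n + 1)]
    ring

end Final
/-- Kimberley's conjecture: |R_{1,β}| = 3·5·…·(2β+1). -/
theorem kimberley (β : ℕ) (hβ : 1 ≤ β) :
    {R : Set (Set (Tup 1 β)) | IsBM 1 β R}.ncard =
      ∏ i ∈ Finset.Icc 1 β, (2 * i + 1) :=
  kb_count β
end

section
/- The map η from the group ⟨a,b,c,d ∣ acac⁻¹, adad⁻¹, bcbd, bc⁻¹bd⁻¹⟩ to the group ⟨a,b,c,d ∣ acad, ac⁻¹ad⁻¹, bcbd, bc⁻¹bd⁻¹⟩ defined on generators by η(a)=ab, η(b)=a, η(c)=ac, η(d)=da⁻¹ is a well-defined group homomorphism. -/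
namespace BMGroups

/-- Generators a, b, c, d of the free group on four letters. -/
def a : FreeGroup (Fin 4) := FreeGroup.of 0
def b : FreeGroup (Fin 4) := FreeGroup.of 1
def c : FreeGroup (Fin 4) := FreeGroup.of 2
def d : FreeGroup (Fin 4) := FreeGroup.of 3

/-- Relators of Γ₄ = ⟨a,b,c,d ∣ acac⁻¹, adad⁻¹, bcbd, bc⁻¹bd⁻¹⟩. -/
def rels4 : Set (FreeGroup (Fin 4)) :=
  {a * c * a * c⁻¹, a * d * a * d⁻¹, b * c * b * d, b * c⁻¹ * b * d⁻¹}

/-- Relators of Γ₃₀ = ⟨a,b,c,d ∣ acad, ac⁻¹ad⁻¹, bcbd, bc⁻¹bd⁻¹⟩. -/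
def rels30 : Set (FreeGroup (Fin 4)) :=
  {a * c * a * d, a * c⁻¹ * a * d⁻¹, b * c * b * d, b * c⁻¹ * b * d⁻¹}

/-- Relators of Γ₅ = ⟨a,b,c,d ∣ acac⁻¹, adad⁻¹, bcb⁻¹c, bdb⁻¹d⟩. -/
def rels5 : Set (FreeGroup (Fin 4)) :=
  {a * c * a * c⁻¹, a * d * a * d⁻¹, b * c * b⁻¹ * c, b * d * b⁻¹ * d}

/-- Relators of Γ₁₀ = ⟨a,b,c,d ∣ acac⁻¹, ada⁻¹d, bcbc⁻¹, bdb⁻¹d⁻¹⟩. -/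
def rels10 : Set (FreeGroup (Fin 4)) :=
  {a * c * a * c⁻¹, a * d * a⁻¹ * d, b * c * b * c⁻¹, b * d * b⁻¹ * d⁻¹}

/-- The group Γ₄. -/
abbrev G4 := PresentedGroup rels4
/-- The group Γ₃₀. -/
abbrev G30 := PresentedGroup rels30
/-- The group Γ₅. -/
abbrev G5 := PresentedGroup rels5
/-- The group Γ₁₀. -/
abbrev G10 := PresentedGroup rels10

/-- The images of the generators a,b,c,d in a presented group. -/
def gen {rels : Set (FreeGroup (Fin 4))} (i : Fin 4) : PresentedGroup rels :=
  PresentedGroup.of i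

/-- η : Γ₄ → Γ₃₀, a ↦ ab, b ↦ a, c ↦ ac, d ↦ da⁻¹, is a well-defined
group homomorphism (auxiliary lemma): relators in `rels` become trivial in `PresentedGroup rels`. -/
lemma mk_rel_eq_one {rels : Set (FreeGroup (Fin 4))} {r : FreeGroup (Fin 4)}
    (hr : r ∈ rels) : PresentedGroup.mk rels r = 1 :=
  (QuotientGroup.eq_one_iff _).2 (Subgroup.subset_normalClosure hr)

/-- The target of η on generators. -/
def fη : Fin 4 → G30 := ![gen 0 * gen 1, gen 0, gen 0 * gen 2, gen 3 * (gen 0)⁻¹]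

lemma fη_rels : ∀ r ∈ rels4, FreeGroup.lift fη r = 1 := by
  -- names for the generators of G30
  set A : G30 := gen 0 with hA
  set B : G30 := gen 1 with hB
  set C : G30 := gen 2 with hC
  set D : G30 := gen 3 with hD
  have hr1 : A * C * A * D = 1 := by
    have := mk_rel_eq_one (rels := rels30) (r := a * c * a * d) (by left; rfl)
    simpa [a, b, c, d, gen, PresentedGroup.of, hA, hB, hC, hD] using this
  have hr2 : A * C⁻¹ * A * D⁻¹ = 1 := by
    have := mk_rel_eq_one (rels := rels30) (r := a * c⁻¹ * a * d⁻¹)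
      (by right; left; rfl)
    simpa [a, b, c, d, gen, PresentedGroup.of, hA, hB, hC, hD] using this
  have hr3 : B * C * B * D = 1 := by
    have := mk_rel_eq_one (rels := rels30) (r := b * c * b * d)
      (by right; right; left; rfl)
    simpa [a, b, c, d, gen, PresentedGroup.of, hA, hB, hC, hD] using this
  have hr4 : B * C⁻¹ * B * D⁻¹ = 1 := by
    have := mk_rel_eq_one (rels := rels30) (r := b * c⁻¹ * b * d⁻¹)
      (by right; right; right; rfl)
    simpa [a, b, c, d, gen, PresentedGroup.of, hA, hB, hC, hD] using this
  -- derived relations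
  have h1 : A * C * A = D⁻¹ := eq_inv_of_mul_eq_one_left hr1
  have h4inv : (B * C⁻¹ * B)⁻¹ = D⁻¹ := by
    have h4 : B * C⁻¹ * B = D := by
      have : B * C⁻¹ * B * D⁻¹ * D = 1 * D := by rw [hr4]
      simpa using this
    rw [h4]
  have h5 : B * D * B = C⁻¹ := by
    have h3 : B * C * B = D⁻¹ := eq_inv_of_mul_eq_one_left hr3
    have hC' : C = B⁻¹ * D⁻¹ * B⁻¹ := by rw [← h3]; group
    rw [hC']; group
  intro r hr
  rcases hr with h | h | h | h <;> subst h <;>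
    simp only [a, b, c, d, map_mul, map_inv, FreeGroup.lift_apply_of, fη,
      Matrix.cons_val_zero, Matrix.cons_val_one, Matrix.head_cons, Matrix.cons_val_two,
      Matrix.tail_cons, Matrix.cons_val_three, ← hA, ← hB, ← hC, ← hD]
  · -- acac⁻¹ ↦ 1
    have key : A * B * (A * C) * (A * B) * (A * C)⁻¹
        = A * B * (A * C * A) * B * C⁻¹ * A⁻¹ := by group
    rw [key, h1, ← h4inv]; group
  · -- adad⁻¹ ↦ 1
    have key : A * B * (D * A⁻¹) * (A * B) * (D * A⁻¹)⁻¹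
        = A * (B * D * B) * A * D⁻¹ := by group
    rw [key, h5]; exact hr2
  · -- bcbd ↦ 1
    have key : A * (A * C) * A * (D * A⁻¹)
        = A * (A * C * A * D) * A⁻¹ := by group
    rw [key, hr1]; group
  · -- bc⁻¹bd⁻¹ ↦ 1
    have key : A * (A * C)⁻¹ * A * (D * A⁻¹)⁻¹
        = A * C⁻¹ * A * D⁻¹ := by group
    rw [key]; exact hr2

/-- η : Γ₄ → Γ₃₀, a ↦ ab, b ↦ a, c ↦ ac, d ↦ da⁻¹, is a well-defined
group homomorphism. -/
theorem eta_well_defined :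
    ∃ η : G4 →* G30,
      η (gen 0) = gen 0 * gen 1 ∧
      η (gen 1) = gen 0 ∧
      η (gen 2) = gen 0 * gen 2 ∧
      η (gen 3) = gen 3 * (gen 0)⁻¹ := by
  refine ⟨PresentedGroup.toGroup fη_rels, ?_, ?_, ?_, ?_⟩ <;>
    simp [gen, PresentedGroup.toGroup.of, fη]


end BMGroups
end

section
/- The map θ from the group ⟨a,b,c,d ∣ acad, ac⁻¹ad⁻¹, bcbd, bc⁻¹bd⁻¹⟩ to the group ⟨a,b,c,d ∣ acac⁻¹, adad⁻¹, bcbd, bc⁻¹bd⁻¹⟩ defined on generators by θ(a)=b, θ(b)=b⁻¹a, θ(c)=b⁻¹c, θ(d)=db is a well-defined group homomorphism. -/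
/-! Each relator of Γ₃₀ is sent by θ to a product of conjugates of relators of Γ₄. Besides the
relators themselves this uses `b⁻¹c = d⁻¹b`, a rearrangement of `bc⁻¹bd⁻¹`, and the fact that
`xyxy⁻¹ = 1` implies `xy⁻¹xy = 1` (both say that conjugation by `y` inverts `x`). -/

namespace BMGroups

section
variable {G : Type*} [Group G]

theorem mul_inv_mul_mul_eq_one_of_mul_mul_mul_inv_eq_one {x y : G}
    (h : x * y * x * y⁻¹ = 1) : x * y⁻¹ * x * y = 1 :=
  calc x * y⁻¹ * x * y = (x * y)⁻¹ * (x * y * x * y⁻¹) * (x * y) := by group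
    _ = 1 := by rw [h]; group

def thetaImages (f : Fin 4 → G) : Fin 4 → G :=
  ![f 1, (f 1)⁻¹ * f 0, (f 1)⁻¹ * f 2, f 3 * f 1]

theorem lift_thetaImages_eq_one_of_mem_rels30 {f : Fin 4 → G}
    (hf : ∀ r ∈ rels4, FreeGroup.lift f r = 1) :
    ∀ r ∈ rels30, FreeGroup.lift (thetaImages f) r = 1 := by
  simp only [rels4, rels30, Set.mem_insert_iff, Set.mem_singleton_iff, forall_eq_or_imp, forall_eq,
    a, b, c, d, map_mul, map_inv, FreeGroup.lift_apply_of, thetaImages, Matrix.cons_val] at hf ⊢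
  set A := f 0
  set B := f 1
  set C := f 2
  set D := f 3
  obtain ⟨hAC, hAD, hBCBD, hBCBD'⟩ := hf
  have hAD' : A * D⁻¹ * A * D = 1 := mul_inv_mul_mul_eq_one_of_mul_mul_mul_inv_eq_one hAD
  have hAC' : A * C⁻¹ * A * C = 1 := mul_inv_mul_mul_eq_one_of_mul_mul_mul_inv_eq_one hAC
  have hBC : B⁻¹ * C = D⁻¹ * B := by
    rw [← mul_inv_eq_one]
    calc B⁻¹ * C * (D⁻¹ * B)⁻¹ = D⁻¹ * (B * C⁻¹ * B * D⁻¹)⁻¹ * D := by group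
      _ = 1 := by rw [hBCBD']; group
  refine ⟨?_, ?_, ?_, ?_⟩
  · calc B * (B⁻¹ * C) * B * (D * B) = B⁻¹ * (B * C * B * D) * B := by group
      _ = 1 := by rw [hBCBD]; group
  · calc B * (B⁻¹ * C)⁻¹ * B * (D * B)⁻¹ = B * C⁻¹ * B * D⁻¹ := by group
      _ = 1 := hBCBD'
  · calc B⁻¹ * A * (B⁻¹ * C) * (B⁻¹ * A) * (D * B)
        = B⁻¹ * (A * D⁻¹ * A * D) * B := by rw [hBC]; group
      _ = 1 := by rw [hAD']; group
  · calc B⁻¹ * A * (B⁻¹ * C)⁻¹ * (B⁻¹ * A) * (D * B)⁻¹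
        = B⁻¹ * (A * C⁻¹ * A * C) * B * (D * (B * C * B * D) * D⁻¹)⁻¹ := by group
      _ = 1 := by rw [hAC', hBCBD]; group

end

theorem lift_gen_eq_one_of_mem {rels : Set (FreeGroup (Fin 4))} {r : FreeGroup (Fin 4)}
    (hr : r ∈ rels) : FreeGroup.lift (gen (rels := rels)) r = 1 := by
  have : FreeGroup.lift (gen (rels := rels)) = PresentedGroup.mk rels :=
    FreeGroup.ext_hom _ _ fun _ => FreeGroup.lift_apply_of
  rw [this]
  exact PresentedGroup.one_of_mem hr

/-- θ : Γ₃₀ → Γ₄, a ↦ b, b ↦ b⁻¹a, c ↦ b⁻¹c, d ↦ db, is a well-defined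
group homomorphism. -/
theorem theta_well_defined :
    ∃ θ : G30 →* G4,
      θ (gen 0) = gen 1 ∧
      θ (gen 1) = (gen 1)⁻¹ * gen 0 ∧
      θ (gen 2) = (gen 1)⁻¹ * gen 2 ∧
      θ (gen 3) = gen 3 * gen 1 :=
  ⟨PresentedGroup.toGroup (lift_thetaImages_eq_one_of_mem_rels30 fun _ => lift_gen_eq_one_of_mem),
    PresentedGroup.toGroup.of _, PresentedGroup.toGroup.of _, PresentedGroup.toGroup.of _,
    PresentedGroup.toGroup.of _⟩

end BMGroups
end

section
/- The groups Γ₄ = ⟨a,b,c,d ∣ acac⁻¹, adad⁻¹, bcbd, bc⁻¹bd⁻¹⟩ and Γ₃₀ = ⟨a,b,c,d ∣ acad, ac⁻¹ad⁻¹, bcbd, bc⁻¹bd⁻¹⟩ are isomorphic, via the isomorphism η : Γ₄ → Γ₃₀ with η(a)=ab, η(b)=a, η(c)=ac, η(d)=da⁻¹ and inverse θ : Γ₃₀ → Γ₄ with θ(a)=b, θ(b)=b⁻¹a, θ(c)=b⁻¹c, θ(d)=db. -/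
namespace BMGroups

/-- Any element of the relator set maps to 1 in the presented group. -/
lemma rel_one {α : Type*} {rels : Set (FreeGroup α)} {r : FreeGroup α} (h : r ∈ rels) :
    PresentedGroup.mk rels r = 1 :=
  (QuotientGroup.eq_one_iff _).mpr (Subgroup.subset_normalClosure h)

section Algebra

variable {G : Type*} [Group G] {x y z w : G}

lemma eta1 (h1 : x*z*x*w = 1) (h4 : y*z⁻¹*y*w⁻¹ = 1) :
    (x*y)*(x*z)*(x*y)*(x*z)⁻¹ = 1 := by
  have hxzx : x*z*x = w⁻¹ := eq_inv_of_mul_eq_one_left h1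
  have hyz'y : y*z⁻¹*y = w := by
    have h := eq_inv_of_mul_eq_one_left h4; rwa [inv_inv] at h
  calc (x*y)*(x*z)*(x*y)*(x*z)⁻¹ = x*y*(x*z*x)*y*z⁻¹*x⁻¹ := by group
    _ = x*y*(y*z⁻¹*y)⁻¹*y*z⁻¹*x⁻¹ := by rw [hxzx, ← hyz'y]
    _ = 1 := by group

lemma eta2 (h2 : x*z⁻¹*x*w⁻¹ = 1) (h3 : y*z*y*w = 1) :
    (x*y)*(w*x⁻¹)*(x*y)*(w*x⁻¹)⁻¹ = 1 := by
  have hyzy : y*z*y = w⁻¹ := eq_inv_of_mul_eq_one_left h3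
  have hw : w = (y*z*y)⁻¹ := by rw [hyzy, inv_inv]
  calc (x*y)*(w*x⁻¹)*(x*y)*(w*x⁻¹)⁻¹ = x*(y*w*y)*x*w⁻¹ := by group
    _ = x*(y*(y*z*y)⁻¹*y)*x*w⁻¹ := by rw [← hw]
    _ = x*z⁻¹*x*w⁻¹ := by group
    _ = 1 := h2

lemma eta3 (h1 : x*z*x*w = 1) : x*(x*z)*x*(w*x⁻¹) = 1 := by
  calc x*(x*z)*x*(w*x⁻¹) = x*(x*z*x*w)*x⁻¹ := by group
    _ = 1 := by rw [h1]; group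

lemma eta4 (h2 : x*z⁻¹*x*w⁻¹ = 1) : x*(x*z)⁻¹*x*(w*x⁻¹)⁻¹ = 1 := by
  calc x*(x*z)⁻¹*x*(w*x⁻¹)⁻¹ = x*z⁻¹*x*w⁻¹ := by group
    _ = 1 := h2

lemma theta1 (h3 : y*z*y*w = 1) : y*(y⁻¹*z)*y*(w*y) = 1 := by
  calc y*(y⁻¹*z)*y*(w*y) = y⁻¹*(y*z*y*w)*y*y⁻¹*y := by group
    _ = 1 := by rw [h3]; group

lemma theta2 (h4 : y*z⁻¹*y*w⁻¹ = 1) : y*(y⁻¹*z)⁻¹*y*(w*y)⁻¹ = 1 := by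
  calc y*(y⁻¹*z)⁻¹*y*(w*y)⁻¹ = y*z⁻¹*y*w⁻¹ := by group
    _ = 1 := h4

lemma theta3 (h2 : x*w*x*w⁻¹ = 1) (h4 : y*z⁻¹*y*w⁻¹ = 1) :
    (y⁻¹*x)*(y⁻¹*z)*(y⁻¹*x)*(w*y) = 1 := by
  have hxwx : x*w*x = w := by
    have h := eq_inv_of_mul_eq_one_left h2; rwa [inv_inv] at h
  have hxw'x : x*w⁻¹*x = w⁻¹ := by
    calc x*w⁻¹*x = x*(x*w*x)⁻¹*x := by rw [hxwx]
      _ = w⁻¹ := by group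
  have hyz'y : y*z⁻¹*y = w := by
    have h := eq_inv_of_mul_eq_one_left h4; rwa [inv_inv] at h
  have hz : z = y*w⁻¹*y := by
    have hzi : z⁻¹ = y⁻¹*w*y⁻¹ := by
      calc z⁻¹ = y⁻¹*(y*z⁻¹*y)*y⁻¹ := by group
        _ = y⁻¹*w*y⁻¹ := by rw [hyz'y]
    calc z = (z⁻¹)⁻¹ := by rw [inv_inv]
      _ = (y⁻¹*w*y⁻¹)⁻¹ := by rw [hzi]
      _ = y*w⁻¹*y := by group
  calc (y⁻¹*x)*(y⁻¹*z)*(y⁻¹*x)*(w*y)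
      = y⁻¹*x*y⁻¹*z*y⁻¹*x*w*y := by group
    _ = y⁻¹*x*y⁻¹*(y*w⁻¹*y)*y⁻¹*x*w*y := by rw [hz]
    _ = y⁻¹*(x*w⁻¹*x)*w*y := by group
    _ = y⁻¹*w⁻¹*w*y := by rw [hxw'x]
    _ = 1 := by group

lemma theta4 (h1 : x*z*x*z⁻¹ = 1) (h3 : y*z*y*w = 1) :
    (y⁻¹*x)*(y⁻¹*z)⁻¹*(y⁻¹*x)*(w*y)⁻¹ = 1 := by
  have hxzx : x*z*x = z := by
    have h := eq_inv_of_mul_eq_one_left h1; rwa [inv_inv] at h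
  have hxz'x : x*z⁻¹*x = z⁻¹ := by
    calc x*z⁻¹*x = x*(x*z*x)⁻¹*x := by rw [hxzx]
      _ = z⁻¹ := by group
  have hyzy : y*z*y = w⁻¹ := eq_inv_of_mul_eq_one_left h3
  have hz' : z⁻¹ = y*w*y := by
    calc z⁻¹ = y*(y*z*y)⁻¹*y := by group
      _ = y*(w⁻¹)⁻¹*y := by rw [hyzy]
      _ = y*w*y := by rw [inv_inv]
  calc (y⁻¹*x)*(y⁻¹*z)⁻¹*(y⁻¹*x)*(w*y)⁻¹
      = y⁻¹*(x*z⁻¹*x)*y⁻¹*w⁻¹ := by group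
    _ = y⁻¹*z⁻¹*y⁻¹*w⁻¹ := by rw [hxz'x]
    _ = y⁻¹*(y*w*y)*y⁻¹*w⁻¹ := by rw [hz']
    _ = 1 := by group

end Algebra

/-- The defining map of η on generators. -/
def η₀ : Fin 4 → G30 := ![gen 0 * gen 1, gen 0, gen 0 * gen 2, gen 3 * (gen 0)⁻¹]

/-- The defining map of θ on generators. -/
def θ₀ : Fin 4 → G4 := ![gen 1, (gen 1)⁻¹ * gen 0, (gen 1)⁻¹ * gen 2, gen 3 * gen 1]

lemma rels30_h1 : (gen 0 : G30) * gen 2 * gen 0 * gen 3 = 1 := by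
  have h := rel_one (rels := rels30) (r := a*c*a*d) (by left; rfl)
  simpa only [a, b, c, d, map_mul, gen, PresentedGroup.of] using h

lemma rels30_h2 : (gen 0 : G30) * (gen 2)⁻¹ * gen 0 * (gen 3)⁻¹ = 1 := by
  have h := rel_one (rels := rels30) (r := a*c⁻¹*a*d⁻¹) (by right; left; rfl)
  simpa only [a, b, c, d, map_mul, map_inv, gen, PresentedGroup.of] using h

lemma rels30_h3 : (gen 1 : G30) * gen 2 * gen 1 * gen 3 = 1 := by
  have h := rel_one (rels := rels30) (r := b*c*b*d) (by right; right; left; rfl)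
  simpa only [a, b, c, d, map_mul, gen, PresentedGroup.of] using h

lemma rels30_h4 : (gen 1 : G30) * (gen 2)⁻¹ * gen 1 * (gen 3)⁻¹ = 1 := by
  have h := rel_one (rels := rels30) (r := b*c⁻¹*b*d⁻¹) (by right; right; right; rfl)
  simpa only [a, b, c, d, map_mul, map_inv, gen, PresentedGroup.of] using h

lemma rels4_h1 : (gen 0 : G4) * gen 2 * gen 0 * (gen 2)⁻¹ = 1 := by
  have h := rel_one (rels := rels4) (r := a*c*a*c⁻¹) (by left; rfl)
  simpa only [a, b, c, d, map_mul, map_inv, gen, PresentedGroup.of] using h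

lemma rels4_h2 : (gen 0 : G4) * gen 3 * gen 0 * (gen 3)⁻¹ = 1 := by
  have h := rel_one (rels := rels4) (r := a*d*a*d⁻¹) (by right; left; rfl)
  simpa only [a, b, c, d, map_mul, map_inv, gen, PresentedGroup.of] using h

lemma rels4_h3 : (gen 1 : G4) * gen 2 * gen 1 * gen 3 = 1 := by
  have h := rel_one (rels := rels4) (r := b*c*b*d) (by right; right; left; rfl)
  simpa only [a, b, c, d, map_mul, gen, PresentedGroup.of] using h

lemma rels4_h4 : (gen 1 : G4) * (gen 2)⁻¹ * gen 1 * (gen 3)⁻¹ = 1 := by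
  have h := rel_one (rels := rels4) (r := b*c⁻¹*b*d⁻¹) (by right; right; right; rfl)
  simpa only [a, b, c, d, map_mul, map_inv, gen, PresentedGroup.of] using h

lemma eta_wd : ∀ r ∈ rels4, FreeGroup.lift η₀ r = 1 := by
  intro r hr
  rcases hr with rfl | rfl | rfl | rfl <;>
    simp only [a, b, c, d, map_mul, map_inv, FreeGroup.lift_apply_of, η₀,
      Matrix.cons_val_zero, Matrix.cons_val_one, Matrix.head_cons,
      Matrix.cons_val_two, Matrix.tail_cons, Matrix.cons_val_three]
  · exact eta1 rels30_h1 rels30_h4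
  · exact eta2 rels30_h2 rels30_h3
  · exact eta3 rels30_h1
  · exact eta4 rels30_h2

lemma theta_wd : ∀ r ∈ rels30, FreeGroup.lift θ₀ r = 1 := by
  intro r hr
  rcases hr with rfl | rfl | rfl | rfl <;>
    simp only [a, b, c, d, map_mul, map_inv, FreeGroup.lift_apply_of, θ₀,
      Matrix.cons_val_zero, Matrix.cons_val_one, Matrix.head_cons,
      Matrix.cons_val_two, Matrix.tail_cons, Matrix.cons_val_three]
  · exact theta1 rels4_h3
  · exact theta2 rels4_h4
  · exact theta3 rels4_h2 rels4_h4
  · exact theta4 rels4_h1 rels4_h3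

/-- The homomorphism η : Γ₄ → Γ₃₀. -/
def ηhom : G4 →* G30 := PresentedGroup.toGroup eta_wd

/-- The homomorphism θ : Γ₃₀ → Γ₄. -/
def θhom : G30 →* G4 := PresentedGroup.toGroup theta_wd

lemma theta_eta : θhom.comp ηhom = MonoidHom.id G4 := by
  refine PresentedGroup.ext fun i => ?_
  fin_cases i <;>
    simp [ηhom, θhom, η₀, θ₀, gen, MonoidHom.comp_apply, PresentedGroup.toGroup.of,
      map_mul, map_inv, Matrix.cons_val_zero, Matrix.cons_val_one, Matrix.head_cons,
      Matrix.cons_val_two, Matrix.tail_cons, Matrix.cons_val_three,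
      mul_inv_cancel_left, inv_mul_cancel_left, mul_inv_cancel_right, inv_mul_cancel_right]

lemma eta_theta : ηhom.comp θhom = MonoidHom.id G30 := by
  refine PresentedGroup.ext fun i => ?_
  fin_cases i <;>
    simp [ηhom, θhom, η₀, θ₀, gen, MonoidHom.comp_apply, PresentedGroup.toGroup.of,
      map_mul, map_inv, Matrix.cons_val_zero, Matrix.cons_val_one, Matrix.head_cons,
      Matrix.cons_val_two, Matrix.tail_cons, Matrix.cons_val_three,
      mul_inv_cancel_left, inv_mul_cancel_left, mul_inv_cancel_right, inv_mul_cancel_right]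

/-- Γ₄ ≅ Γ₃₀ via η : a ↦ ab, b ↦ a, c ↦ ac, d ↦ da⁻¹, with inverse
θ : a ↦ b, b ↦ b⁻¹a, c ↦ b⁻¹c, d ↦ db. -/
theorem G4_iso_G30 :
    ∃ η : G4 ≃* G30,
      η (gen 0) = gen 0 * gen 1 ∧
      η (gen 1) = gen 0 ∧
      η (gen 2) = gen 0 * gen 2 ∧
      η (gen 3) = gen 3 * (gen 0)⁻¹ ∧
      η.symm (gen 0) = gen 1 ∧
      η.symm (gen 1) = (gen 1)⁻¹ * gen 0 ∧
      η.symm (gen 2) = (gen 1)⁻¹ * gen 2 ∧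
      η.symm (gen 3) = gen 3 * gen 1 := by
  refine ⟨MonoidHom.toMulEquiv ηhom θhom theta_eta eta_theta, ?_, ?_, ?_, ?_, ?_, ?_, ?_, ?_⟩ <;>
    simp [MonoidHom.toMulEquiv, ηhom, θhom, η₀, θ₀, gen, PresentedGroup.toGroup.of,
      Matrix.cons_val_zero, Matrix.cons_val_one, Matrix.head_cons,
      Matrix.cons_val_two, Matrix.tail_cons, Matrix.cons_val_three]

end BMGroups
end

section
/- The map φ from the group ⟨a,b,c,d ∣ acac⁻¹, adad⁻¹, bcb⁻¹c, bdb⁻¹d⟩ to the group ⟨a,b,c,d ∣ acac⁻¹, ada⁻¹d, bcbc⁻¹, bdb⁻¹d⁻¹⟩ defined on generators by φ(a)=d, φ(b)=ac, φ(c)=a, φ(d)=ab is a well-defined group homomorphism. -/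
namespace BMGroups

/-! By von Dyck's theorem it suffices that d, ac, a, ab satisfy the relators of Γ₅ in Γ₁₀. Since
b commutes with d and bcb = c (hence bc⁻¹b = c⁻¹), each of the
four images reduces to one of the relators acac⁻¹ or ada⁻¹d of Γ₁₀. -/

lemma _root_.PresentedGroup.lift_of_eq_one_of_mem {α : Type*} {rels : Set (FreeGroup α)}
    {r : FreeGroup α} (hr : r ∈ rels) :
    FreeGroup.lift (PresentedGroup.of (rels := rels)) r = 1 := by
  have : FreeGroup.lift (PresentedGroup.of (rels := rels)) = PresentedGroup.mk rels :=
    FreeGroup.ext_hom _ _ fun _ ↦ FreeGroup.lift_apply_of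
  rw [this]
  exact PresentedGroup.one_of_mem hr

section
variable {G : Type*} [Group G]

lemma forall_rels5_lift_eq_one_iff (f : Fin 4 → G) :
    (∀ r ∈ rels5, FreeGroup.lift f r = 1) ↔
      f 0 * f 2 * f 0 * (f 2)⁻¹ = 1 ∧ f 0 * f 3 * f 0 * (f 3)⁻¹ = 1 ∧
      f 1 * f 2 * (f 1)⁻¹ * f 2 = 1 ∧ f 1 * f 3 * (f 1)⁻¹ * f 3 = 1 := by
  simp [rels5, a, b, c, d]

lemma forall_rels10_lift_eq_one_iff (f : Fin 4 → G) :
    (∀ r ∈ rels10, FreeGroup.lift f r = 1) ↔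
      f 0 * f 2 * f 0 * (f 2)⁻¹ = 1 ∧ f 0 * f 3 * (f 0)⁻¹ * f 3 = 1 ∧
      f 1 * f 2 * f 1 * (f 2)⁻¹ = 1 ∧ f 1 * f 3 * (f 1)⁻¹ * (f 3)⁻¹ = 1 := by
  simp [rels10, a, b, c, d]

lemma rels5_relations_of_rels10_relations {x y z w : G} (hxz : x * z * x * z⁻¹ = 1)
    (hxw : x * w * x⁻¹ * w = 1) (hyz : y * z * y * z⁻¹ = 1)
    (hyw : y * w * y⁻¹ * w⁻¹ = 1) :
    w * x * w * x⁻¹ = 1 ∧ w * (x * y) * w * (x * y)⁻¹ = 1 ∧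
      x * z * x * (x * z)⁻¹ * x = 1 ∧ x * z * (x * y) * (x * z)⁻¹ * (x * y) = 1 := by
  have hx_conj_w : x * w * x⁻¹ = w⁻¹ := eq_inv_of_mul_eq_one_left hxw
  have hy_comm_w : y * w * y⁻¹ = w := by simpa using eq_inv_of_mul_eq_one_left hyw
  have hy_conj_zinv : y * z⁻¹ * y = z⁻¹ := by
    have hyzy : y * z * y = z := by simpa using eq_inv_of_mul_eq_one_left hyz
    calc y * z⁻¹ * y = y * (y * z * y)⁻¹ * y := by rw [hyzy]
      _ = z⁻¹ := by group
  have hwx : w * x * w * x⁻¹ = 1 := by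
    calc w * x * w * x⁻¹ = w * (x * w * x⁻¹) := by group
      _ = 1 := by rw [hx_conj_w, mul_inv_cancel]
  refine ⟨hwx, ?_, ?_, ?_⟩
  · calc w * (x * y) * w * (x * y)⁻¹ = w * x * (y * w * y⁻¹) * x⁻¹ := by group
      _ = 1 := by rw [hy_comm_w, hwx]
  · calc x * z * x * (x * z)⁻¹ * x = x * z * x * z⁻¹ := by group
      _ = 1 := hxz
  · calc x * z * (x * y) * (x * z)⁻¹ * (x * y) = x * z * x * (y * z⁻¹ * y) := by group
      _ = 1 := by rw [hy_conj_zinv, hxz]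

end

/-- φ : Γ₅ → Γ₁₀, a ↦ d, b ↦ ac, c ↦ a, d ↦ ab, is a well-defined
group homomorphism. -/
theorem phi_well_defined :
    ∃ φ : G5 →* G10,
      φ (gen 0) = gen 3 ∧
      φ (gen 1) = gen 0 * gen 2 ∧
      φ (gen 2) = gen 0 ∧
      φ (gen 3) = gen 0 * gen 1 := by
  obtain ⟨hac, had, hbc, hbd⟩ := (forall_rels10_lift_eq_one_iff (gen (rels := rels10))).1
    fun _ ↦ PresentedGroup.lift_of_eq_one_of_mem
  have hφ := (forall_rels5_lift_eq_one_iff ![gen 3, gen 0 * gen 2, gen 0, gen 0 * gen 1]).2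
    (rels5_relations_of_rels10_relations hac had hbc hbd)
  exact ⟨PresentedGroup.toGroup hφ, PresentedGroup.toGroup.of hφ, PresentedGroup.toGroup.of hφ,
    PresentedGroup.toGroup.of hφ, PresentedGroup.toGroup.of hφ⟩

end BMGroups
end
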